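/- arXiv:1303.5617 — 4 statements merged into one kernel-verified Lean document; each statement's English description precedes it below -/
import Mathlib

section
/- Let B be a set of positive integers, and for each b in B let Ω_b be a subset of {0,1,...,b-1}. For b in B let S_b = {n ∈ ℕ : n mod b ∈ Ω_b}, and assume S_b(x) ≤ c_b·x for all x ≥ 0, where the positive constants c_b satisfy ∑_{b∈B} c_b < ∞. Then the set of positive integers n such that n mod b ∉ Ω_b for all b ∈ B possesses an asymptotic density. -/
open Filter Topology ArithmeticFunction

/-- Number of elements of `A` in `[1, N]`. -/
noncomputable def cnt (A : Set ℕ) (N : ℕ) : ℕ := (A ∩ Set.Icc 1 N).ncard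

/-- `A ⊆ ℕ` has asymptotic density `d`. -/
def HasDensity (A : Set ℕ) (d : ℝ) : Prop :=
  Filter.Tendsto (fun N : ℕ => (cnt A N : ℝ) / N) Filter.atTop (nhds d)

/-- `A` is thin: the sum of the reciprocals of its elements converges. -/
def Thin (A : Set ℕ) : Prop := Summable (fun a : A => (1 : ℝ) / a)

/-! Sieving by finitely many moduli `b ∈ s ⊆ B` leaves a set that is periodic modulo `∏ b`, hence
has a density. The integers removed by the remaining moduli number at most `(∑_{b ∉ s} c_b) N`
up to `N`, which is uniformly small once `s` is large, so the counting ratios of the full sieved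
set form a Cauchy sequence. -/

open Function

lemma cauchySeq_of_uniform_approx {α β : Type*} [PseudoMetricSpace α] [Nonempty β]
    [SemilatticeSup β] {u : β → α}
    (h : ∀ ε > 0, ∃ v : β → α, CauchySeq v ∧ ∀ n, dist (u n) (v n) ≤ ε) : CauchySeq u := by
  rw [Metric.cauchySeq_iff']
  intro ε hε
  obtain ⟨v, hv, huv⟩ := h (ε / 4) (by positivity)
  obtain ⟨N, hN⟩ := Metric.cauchySeq_iff'.1 hv (ε / 4) (by positivity)
  refine ⟨N, fun n hn => ?_⟩
  calc dist (u n) (u N) ≤ dist (u n) (v n) + dist (v n) (v N) + dist (v N) (u N) :=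
        dist_triangle4 _ _ _ _
    _ < ε := by linarith [huv n, hN n hn, dist_comm (v N) (u N) ▸ huv N]

lemma tendsto_div_of_abs_sub_mul_le {a : ℕ → ℝ} {d C : ℝ} (h : ∀ N, |a N - d * N| ≤ C) :
    Tendsto (fun N => a N / N) atTop (𝓝 d) := by
  rw [tendsto_iff_dist_tendsto_zero]
  refine squeeze_zero' (.of_forall fun _ => dist_nonneg) ?_
    (tendsto_const_div_atTop_nhds_zero_nat C)
  filter_upwards [eventually_gt_atTop 0] with N hN
  rw [Real.dist_eq, show a N / N - d = (a N - d * N) / N by field_simp, abs_div, Nat.abs_cast]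
  gcongr
  exact h N

namespace Nat

variable {p : ℕ → Prop} [DecidablePred p] {L : ℕ}

lemma count_add_mul_of_periodic (hp : Periodic p L) (n q : ℕ) :
    count p (n + q * L) = count p n + q * count p L := by
  induction q with
  | zero => simp
  | succ q ih =>
    rw [add_mul, one_mul, ← add_assoc, count_add']
    simp only [hp.funext, ih]
    ring

lemma abs_count_sub_le_of_periodic (hL : 0 < L) (hp : Periodic p L) (N : ℕ) :
    |(count p N : ℝ) - count p L / L * N| ≤ count p L := by
  have hr : (count p (N % L) : ℝ) ≤ count p L := mod_cast count_monotone p (mod_lt N hL).le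
  have hrL : ((N % L : ℕ) : ℝ) ≤ L := by exact_mod_cast (mod_lt N hL).le
  have hLpos : (0 : ℝ) < L := by exact_mod_cast hL
  have hfrac : (count p L : ℝ) / L * (N % L : ℕ) ≤ count p L := by
    rw [div_mul_eq_mul_div, div_le_iff₀ hLpos]
    gcongr
  have hsplit : (count p N : ℝ) - count p L / L * N
      = count p (N % L) - count p L / L * (N % L : ℕ) := by
    conv_lhs => rw [← mod_add_div' N L, count_add_mul_of_periodic hp]
    push_cast
    field_simp
    ring
  rw [hsplit, abs_sub_le_iff]
  constructor <;> linarith [(count p (N % L)).cast_nonneg (α := ℝ), hfrac,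
    show 0 ≤ (count p L : ℝ) / L * (N % L : ℕ) by positivity]

end Nat

lemma cnt_eq_count (P : ℕ → Prop) [DecidablePred P] (N : ℕ) :
    cnt {n | P n} N = Nat.count (fun k => P (k + 1)) N := by
  rw [cnt, Nat.count_eq_card_filter_range,
    ← Finset.card_image_of_injective _ (add_left_injective 1), ← Set.ncard_coe_finset]
  congr 1
  ext n
  rcases n with _ | n <;> simp [and_comm]

lemma cnt_mono {A A' : Set ℕ} (h : A ⊆ A') (N : ℕ) : cnt A N ≤ cnt A' N :=
  Set.ncard_le_ncard (Set.inter_subset_inter_left _ h)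
    ((Set.finite_Icc 1 N).subset Set.inter_subset_right)

lemma cnt_le_cnt_add_cnt {A A' E : Set ℕ} (h : A' \ {0} ⊆ A ∪ E) (N : ℕ) :
    cnt A' N ≤ cnt A N + cnt E N := by
  refine (Set.ncard_le_ncard ?_ (((Set.finite_Icc 1 N).subset Set.inter_subset_right).union
    ((Set.finite_Icc 1 N).subset Set.inter_subset_right))).trans (Set.ncard_union_le _ _)
  rintro n ⟨hn, hnN⟩
  rcases h ⟨hn, by rintro rfl; simp at hnN⟩ with hA | hE
  · exact Or.inl ⟨hA, hnN⟩
  · exact Or.inr ⟨hE, hnN⟩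

lemma cnt_iUnion_le {ι : Type*} (S : ι → Set ℕ) (c : ι → ℝ) (ε : ℝ)
    (hS : ∀ i N, (cnt (S i) N : ℝ) ≤ c i * N) (hc : ∀ t : Finset ι, ∑ i ∈ t, c i ≤ ε) (N : ℕ) :
    (cnt (⋃ i, S i) N : ℝ) ≤ ε * N := by
  have hfin : ((⋃ i, S i) ∩ Set.Icc 1 N).Finite :=
    (Set.finite_Icc 1 N).subset Set.inter_subset_right
  obtain ⟨I, hI, hcover⟩ := Set.finite_subset_iUnion hfin (Set.iUnion_inter _ _).subset
  have hcard : cnt (⋃ i, S i) N ≤ ∑ i ∈ hI.toFinset, cnt (S i) N := by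
    refine (Set.ncard_le_ncard (by simpa using hcover) ?_).trans
      (Finset.set_ncard_biUnion_le _ _)
    exact (Set.finite_Icc 1 N).subset (by simp)
  calc (cnt (⋃ i, S i) N : ℝ) ≤ ∑ i ∈ hI.toFinset, (cnt (S i) N : ℝ) := by exact_mod_cast hcard
    _ ≤ ∑ i ∈ hI.toFinset, c i * N := Finset.sum_le_sum fun i _ => hS i N
    _ = (∑ i ∈ hI.toFinset, c i) * N := (Finset.sum_mul _ _ _).symm
    _ ≤ ε * N := by gcongr; exact hc _

lemma hasDensity_of_periodic {P : ℕ → Prop} {L : ℕ} (hL : 0 < L) (hP : Periodic P L) :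
    HasDensity {n | P n} (cnt {n | P n} L / L) := by
  classical
  simp only [HasDensity, cnt_eq_count]
  exact tendsto_div_of_abs_sub_mul_le (Nat.abs_count_sub_le_of_periodic hL (hP.add_const 1))

lemma exists_hasDensity_of_uniform_approx {A : Set ℕ}
    (h : ∀ ε > 0, ∃ A' d, HasDensity A' d ∧ ∀ N, |(cnt A N : ℝ) - cnt A' N| ≤ ε * N) :
    ∃ d, HasDensity A d := by
  refine cauchySeq_tendsto_of_complete (cauchySeq_of_uniform_approx fun ε hε => ?_)
  obtain ⟨A', d, hA', hclose⟩ := h ε hε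
  refine ⟨_, hA'.cauchySeq, fun N => ?_⟩
  rw [Real.dist_eq, ← sub_div, abs_div, Nat.abs_cast]
  exact div_le_of_le_mul₀ N.cast_nonneg hε.le (hclose N)

section Sieve

variable {B : Set ℕ} {Om : ℕ → Set ℕ}

lemma periodic_sieve (s : Finset B) :
    Periodic (fun n => ∀ b ∈ s, n % (b : ℕ) ∉ Om b) (∏ b ∈ s, (b : ℕ)) := by
  intro n
  refine propext (forall₂_congr fun b hb => ?_)
  obtain ⟨k, hk⟩ := Finset.dvd_prod_of_mem Subtype.val hb
  rw [hk, Nat.add_mul_mod_self_left]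

lemma abs_cnt_sub_cnt_sieve_le {c : ℕ → ℝ} {ε : ℝ}
    (hcount : ∀ b ∈ B, ∀ N : ℕ, (cnt {n : ℕ | n % b ∈ Om b} N : ℝ) ≤ c b * N)
    (s : Finset B) (hs : ∀ t : Finset B, Disjoint t s → ∑ b ∈ t, c b ≤ ε) (N : ℕ) :
    |(cnt {n : ℕ | 0 < n ∧ ∀ b ∈ B, n % b ∉ Om b} N : ℝ)
      - cnt {n | ∀ b ∈ s, n % (b : ℕ) ∉ Om b} N| ≤ ε * N := by
  set A := {n : ℕ | 0 < n ∧ ∀ b ∈ B, n % b ∉ Om b}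
  set As := {n | ∀ b ∈ s, n % (b : ℕ) ∉ Om b}
  set E := ⋃ b : {b : B // b ∉ s}, {n | n % (b : ℕ) ∈ Om b}
  have hAAs : (cnt A N : ℝ) ≤ cnt As N := by
    exact_mod_cast cnt_mono (show A ⊆ As from fun _ hn b _ => hn.2 b b.2) N
  have hAsAE : (cnt As N : ℝ) ≤ cnt A N + cnt E N := by
    refine mod_cast cnt_le_cnt_add_cnt (fun n ⟨hn, hn0⟩ => ?_) N
    rw [Set.mem_union, or_iff_not_imp_left]
    intro hA
    obtain ⟨b, hb, hbn⟩ : ∃ b ∈ B, n % b ∈ Om b := by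
      simpa [A, Nat.pos_of_ne_zero hn0] using hA
    exact Set.mem_iUnion.2 ⟨⟨⟨b, hb⟩, fun hbs => hn ⟨b, hb⟩ hbs hbn⟩, hbn⟩
  have hE : (cnt E N : ℝ) ≤ ε * N := by
    refine cnt_iUnion_le _ (fun b : {b : B // b ∉ s} => c b) ε (fun b => hcount b b.1.2)
      (fun t => ?_) N
    simpa [Finset.sum_map] using hs (t.map (Embedding.subtype _))
      (Finset.disjoint_left.2 fun b hb => by
        obtain ⟨b', -, rfl⟩ := Finset.mem_map.1 hb
        exact b'.2)
  rw [abs_sub_le_iff]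
  constructor <;> linarith [(cnt E N).cast_nonneg (α := ℝ)]

end Sieve

theorem sieved_set_has_density_general
    (B : Set ℕ) (hBpos : ∀ b ∈ B, 0 < b)
    (Om : ℕ → Set ℕ)
    (c : ℕ → ℝ)
    (hcount : ∀ b ∈ B, ∀ N : ℕ, (cnt {n : ℕ | n % b ∈ Om b} N : ℝ) ≤ c b * N)
    (hsum : Summable (fun b : B => c b)) :
    ∃ d : ℝ, HasDensity {n : ℕ | 0 < n ∧ ∀ b ∈ B, n % b ∉ Om b} d := by
  refine exists_hasDensity_of_uniform_approx fun ε hε => ?_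
  obtain ⟨s, hs⟩ := summable_iff_vanishing.1 hsum (Set.Iic ε) (Iic_mem_nhds hε)
  refine ⟨_, _, hasDensity_of_periodic ?_ (periodic_sieve s), abs_cnt_sub_cnt_sieve_le hcount s hs⟩
  exact Finset.prod_pos fun b _ => hBpos b b.2

theorem sieved_set_has_density
    (B : Set ℕ) (hBpos : ∀ b ∈ B, 0 < b)
    (Om : ℕ → Set ℕ) (hOm : ∀ b ∈ B, Om b ⊆ Set.Iio b)
    (c : ℕ → ℝ) (hcpos : ∀ b ∈ B, 0 < c b)
    (hcount : ∀ b ∈ B, ∀ N : ℕ, (cnt {n : ℕ | n % b ∈ Om b} N : ℝ) ≤ c b * N)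
    (hsum : Summable (fun b : B => c b)) :
    ∃ d : ℝ, HasDensity {n : ℕ | 0 < n ∧ ∀ b ∈ B, n % b ∉ Om b} d :=
  sieved_set_has_density_general B hBpos Om c hcount hsum
end

section
/- Let A be a set of positive integers, P a set of primes, and for each p ∈ P let K_p be a set of nonnegative integers. Let S be the set of positive integers n such that no a ∈ A divides n and there are no p ∈ P and k ∈ K_p with p^k exactly dividing n. Let P_1 = {p ∈ P : 1 ∈ K_p}. If A ∪ P_1 is thin, then S possesses an asymptotic density. Moreover, if 0 ∉ K_p for all p ∈ P and 1 ∉ A, then the density of S is positive. -/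
open Filter Topology ArithmeticFunction

/-!
If infinitely many `p ∈ P` have `0 ∈ K p`, every sieved number is divisible by arbitrarily large
such `p`, so the density is `0`. Otherwise, keeping only the conditions that involve numbers `≤ T`
gives a periodic set, which has a density. It differs from the sieved set only by multiples of
moduli `m > T` from the thin set `A ∪ P₁ ∪ {perfect powers}`, a set of upper density at most
`∑_{m > T} 1/m → 0`, so the densities of the truncations form a Cauchy sequence.

For positivity, sieve the `T`-rough numbers instead: they have a positive density `D`, and those
divisible by `m` have density at most `D / m`, since division by `m` maps them injectively back
into the rough numbers. When `1 ∉ A` and `0 ∉ K p`, only moduli `m > T` can divide a rough number,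
so choosing `T` with `∑_{m > T} 1/m ≤ 1/2` leaves the sieved set a density of at least `D / 4`.
-/

section Counting

variable {S S' : Set ℕ} {N : ℕ}

@[simp]
lemma cnt_zero (S : Set ℕ) : cnt S 0 = 0 := by
  simp [cnt]

lemma cnt_le_cnt (h : S ∩ Set.Icc 1 N ⊆ S') : cnt S N ≤ cnt S' N :=
  Set.ncard_le_ncard (Set.subset_inter h Set.inter_subset_right)
    ((Set.finite_Icc 1 N).inter_of_right _)

lemma cnt_mono_s2 (h : S ⊆ S') (N : ℕ) : cnt S N ≤ cnt S' N :=
  cnt_le_cnt (Set.inter_subset_left.trans h)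

lemma cnt_union_le (S S' : Set ℕ) (N : ℕ) : cnt (S ∪ S') N ≤ cnt S N + cnt S' N := by
  rw [cnt, Set.union_inter_distrib_right]
  exact Set.ncard_union_le _ _

lemma cnt_le_of_subset_union {S₁ S₂ : Set ℕ} (h : S ⊆ S₁ ∪ S₂) (N : ℕ) :
    (cnt S N : ℝ) ≤ cnt S₁ N + cnt S₂ N := by
  exact_mod_cast (cnt_mono_s2 h N).trans (cnt_union_le S₁ S₂ N)

lemma cnt_biUnion_le {ι : Type*} (F : Finset ι) (C : ι → Set ℕ) (N : ℕ) :
    cnt (⋃ i ∈ F, C i) N ≤ ∑ i ∈ F, cnt (C i) N := by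
  rw [cnt, Set.iUnion₂_inter]
  exact F.set_ncard_biUnion_le _

lemma cnt_le_self (S : Set ℕ) (N : ℕ) : cnt S N ≤ N := by
  simpa [cnt] using Set.ncard_le_ncard (Set.inter_subset_right (s := S)) (Set.finite_Icc 1 N)

open Classical in
lemma cnt_eq_count_s2 (S : Set ℕ) (N : ℕ) : cnt S N = Nat.count (· + 1 ∈ S) N := by
  have : S ∩ Set.Icc 1 N = (· + 1) '' ↑((Finset.range N).filter (· + 1 ∈ S)) := by
    ext n
    simp only [Set.mem_inter_iff, Set.mem_Icc, Set.mem_image, Finset.coe_filter,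
      Finset.mem_range]
    constructor
    · rintro ⟨hn, h1, hN⟩
      exact ⟨n - 1, ⟨by omega, by rwa [Nat.sub_add_cancel h1]⟩, by omega⟩
    · rintro ⟨k, ⟨hk, hS⟩, rfl⟩
      exact ⟨hS, by omega, by omega⟩
  rw [cnt, this, Set.ncard_image_of_injective _ (add_left_injective 1), Set.ncard_coe_finset,
    Nat.count_eq_card_filter_range]

lemma cnt_le_div_of_forall_dvd {m : ℕ} (h : ∀ n ∈ S, m ∣ n) (N : ℕ) :
    (cnt S N : ℝ) ≤ N / m := by
  classical
  have hcnt : cnt {n | m ∣ n} N = N / m := by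
    rw [← Nat.Ioc_filter_dvd_card_eq_div, cnt, ← Set.ncard_coe_finset]
    congr 1
    ext n
    simp [and_comm, Nat.lt_iff_add_one_le]
  calc (cnt S N : ℝ) ≤ cnt {n | m ∣ n} N := by exact_mod_cast cnt_mono_s2 h N
    _ ≤ N / m := by rw [hcnt]; exact Nat.cast_div_le

lemma cnt_dvd_le_cnt_div {E : Set ℕ} {m : ℕ} (hdiv : ∀ n ∈ E, m ∣ n → n / m ∈ E) (N : ℕ) :
    cnt {n | n ∈ E ∧ m ∣ n} N ≤ cnt E (N / m) := by
  refine Set.ncard_le_ncard_of_injOn (· / m) ?_ ?_ ((Set.finite_Icc 1 _).inter_of_right _)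
  · rintro n ⟨⟨hE, hmn⟩, h1, hN⟩
    have hm : 0 < m := Nat.pos_of_ne_zero (by rintro rfl; simp at hmn; omega)
    exact ⟨hdiv n hE hmn, (Nat.one_le_div_iff hm).2 (Nat.le_of_dvd h1 hmn),
      Nat.div_le_div_right hN⟩
  · rintro a ⟨⟨-, ha⟩, -⟩ b ⟨⟨-, hb⟩, -⟩ hab
    rw [← Nat.div_mul_cancel ha, ← Nat.div_mul_cancel hb]
    exact congrArg (· * m) hab

end Counting

section Density

variable {S : Set ℕ} {d : ℝ}

lemma HasDensity.nonneg (h : HasDensity S d) : 0 ≤ d :=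
  ge_of_tendsto' h fun _ => by positivity

lemma hasDensity_of_abs_sub_le (C : ℝ) (h : ∀ N : ℕ, |(cnt S N : ℝ) - d * N| ≤ C) :
    HasDensity S d := by
  rw [HasDensity, ← tendsto_sub_nhds_zero_iff, tendsto_zero_iff_abs_tendsto_zero]
  refine squeeze_zero' (Eventually.of_forall fun _ => abs_nonneg _) ?_
    (tendsto_const_div_atTop_nhds_zero_nat C)
  filter_upwards [eventually_gt_atTop 0] with N hN
  have hN' : (0 : ℝ) < N := by exact_mod_cast hN
  rw [Function.comp_apply, div_sub' hN'.ne', abs_div, abs_of_pos hN']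
  exact div_le_div_of_nonneg_right ((mul_comm d N) ▸ h N) hN'.le

lemma cnt_add_of_periodic {M : ℕ} (hper : ∀ n, 0 < n → (n ∈ S ↔ n + M ∈ S)) (N : ℕ) :
    cnt S (M + N) = cnt S M + cnt S N := by
  classical
  simp only [cnt_eq_count_s2, Nat.count_add]
  congr 2
  ext k
  rw [hper (k + 1) (Nat.succ_pos k), show M + k + 1 = k + 1 + M by omega]

lemma cnt_mul_add_of_periodic {M : ℕ} (hper : ∀ n, 0 < n → (n ∈ S ↔ n + M ∈ S)) (q r : ℕ) :
    cnt S (q * M + r) = q * cnt S M + cnt S r := by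
  induction q with
  | zero => simp
  | succ q ih =>
    rw [add_mul, one_mul, add_right_comm, add_comm, cnt_add_of_periodic hper, ih]
    ring

lemma hasDensity_of_periodic_s2 {M : ℕ} (hM : 0 < M) (hper : ∀ n, 0 < n → (n ∈ S ↔ n + M ∈ S)) :
    HasDensity S (cnt S M / M) := by
  have hM' : (0 : ℝ) < M := by exact_mod_cast hM
  refine hasDensity_of_abs_sub_le M fun N => ?_
  obtain ⟨q, r, hr, rfl⟩ : ∃ q r, r < M ∧ q * M + r = N :=
    ⟨N / M, N % M, Nat.mod_lt N hM, Nat.div_add_mod' N M⟩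
  have hrM : (r : ℝ) ≤ M := by exact_mod_cast hr.le
  have hcM : (cnt S M : ℝ) ≤ M := by exact_mod_cast cnt_le_self S M
  have hcr : (cnt S r : ℝ) ≤ r := by exact_mod_cast cnt_le_self S r
  -- a full period contributes exactly its share, so only the remainder `r < M` is off
  have : (cnt S (q * M + r) : ℝ) - cnt S M / M * ↑(q * M + r)
      = cnt S r - cnt S M / M * r := by
    rw [cnt_mul_add_of_periodic hper]
    push_cast
    field_simp
    ring
  rw [this]
  refine abs_sub_le_of_nonneg_of_le (by positivity) (hcr.trans hrM) (by positivity) ?_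
  calc (cnt S M : ℝ) / M * r ≤ 1 * M :=
        mul_le_mul ((div_le_one hM').2 hcM) hrM (by positivity) zero_le_one
    _ = M := one_mul _

lemma hasDensity_zero_of_forall_dvd (h : ∀ C : ℕ, ∃ q, C ≤ q ∧ ∀ n ∈ S, q ∣ n) :
    HasDensity S 0 := by
  refine tendsto_order.2 ⟨fun a ha => Eventually.of_forall fun N => ha.trans_le (by positivity),
    fun a ha => Eventually.of_forall fun N => ?_⟩
  obtain ⟨C, hC⟩ := exists_nat_gt a⁻¹
  obtain ⟨q, hCq, hq⟩ := h C
  have hq' : a⁻¹ < q := hC.trans_le (by exact_mod_cast hCq)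
  calc (cnt S N : ℝ) / N ≤ (q : ℝ)⁻¹ :=
        div_le_of_le_mul₀ (by positivity) (by positivity)
          ((cnt_le_div_of_forall_dvd hq N).trans_eq (div_eq_inv_mul _ _))
    _ < a := inv_lt_of_inv_lt₀ ha hq'

lemma HasDensity.tendsto_cnt_div_const (h : HasDensity S d) {m : ℕ} (hm : 0 < m) :
    Tendsto (fun N : ℕ => (cnt S (N / m) : ℝ) / N) atTop (𝓝 (d / m)) := by
  have hm' : (0 : ℝ) < m := by exact_mod_cast hm
  have hquot : Tendsto (fun N : ℕ => ((N / m : ℕ) : ℝ) / N) atTop (𝓝 (1 / m)) := by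
    have := ((tendsto_nat_floor_div_atTop (R := ℝ)).comp
      ((tendsto_natCast_atTop_atTop (R := ℝ)).atTop_div_const hm')).div_const (m : ℝ)
    refine this.congr' ?_
    filter_upwards [eventually_gt_atTop 0] with N hN
    simp only [Function.comp_apply, ← Nat.floor_div_eq_div (K := ℝ)]
    field_simp
  rw [← mul_one_div]
  refine ((h.comp (Nat.tendsto_div_const_atTop hm.ne')).mul hquot).congr fun N => ?_
  rcases Nat.eq_zero_or_pos (N / m) with h0 | h0
  · simp [h0]
  · simp only [Function.comp_apply]
    rw [div_mul_div_cancel₀ (by exact_mod_cast h0.ne')]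

lemma exists_hasDensity_of_approx
    (h : ∀ ε > 0, ∃ S' d', HasDensity S' d' ∧ S ⊆ S' ∧ ∀ N, (cnt S' N : ℝ) ≤ cnt S N + ε * N) :
    ∃ d, HasDensity S d := by
  refine cauchySeq_tendsto_of_complete (Metric.cauchySeq_iff'.2 fun ε hε => ?_)
  obtain ⟨S', d', hd', hsub, happrox⟩ := h (ε / 4) (by positivity)
  have hclose (N : ℕ) : |(cnt S' N : ℝ) / N - cnt S N / N| ≤ ε / 4 := by
    rw [← sub_div, abs_div, Nat.abs_cast]
    refine div_le_of_le_mul₀ (by positivity) (by positivity) (abs_le.2 ⟨?_, ?_⟩)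
    · have : (cnt S N : ℝ) ≤ cnt S' N := by exact_mod_cast cnt_mono_s2 hsub N
      nlinarith [show (0 : ℝ) ≤ ε / 4 * N by positivity]
    · linarith [happrox N]
  obtain ⟨N₀, hN₀⟩ := eventually_atTop.1 (Metric.tendsto_nhds.1 hd' (ε / 4) (by positivity))
  refine ⟨N₀, fun N hN => ?_⟩
  have h1 := abs_sub_lt_iff.1 (hN₀ N hN)
  have h2 := abs_sub_lt_iff.1 (hN₀ N₀ le_rfl)
  have h3 := abs_le.1 (hclose N)
  have h4 := abs_le.1 (hclose N₀)
  rw [Real.dist_eq, abs_sub_lt_iff]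
  constructor <;> linarith

end Density

section Thin

variable {B B' : Set ℕ}

lemma thin_iff_summable_indicator :
    Thin B ↔ Summable (B.indicator fun n : ℕ => (1 : ℝ) / n) :=
  summable_subtype_iff_indicator (f := fun n : ℕ => (1 : ℝ) / n)

lemma Thin.mono (hB : Thin B) (h : B' ⊆ B) : Thin B' := by
  unfold Thin at *
  have := hB.comp_injective (Set.inclusion_injective h)
  exact this

lemma Thin.union (hB : Thin B) (hB' : Thin B') : Thin (B ∪ B') := by
  rw [thin_iff_summable_indicator] at *
  refine (hB.add hB').of_nonneg_of_le (Set.indicator_nonneg fun _ _ => by positivity) fun n => ?_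
  rw [← Pi.add_apply, ← Set.indicator_union_add_inter]
  exact le_add_of_nonneg_right (Set.indicator_nonneg (fun _ _ => by positivity) n)

lemma Thin.sum_le_tsum (hB : Thin B) {F : Finset ℕ} (hF : ∀ m ∈ F, m ∈ B) :
    ∑ m ∈ F, (1 : ℝ) / m ≤ ∑' m : B, (1 : ℝ) / m := by
  rw [tsum_subtype B fun n : ℕ => (1 : ℝ) / n]
  calc ∑ m ∈ F, (1 : ℝ) / m = ∑ m ∈ F, B.indicator (fun n : ℕ => (1 : ℝ) / n) m :=
        Finset.sum_congr rfl fun m hm =>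
          (Set.indicator_of_mem (hF m hm) fun n : ℕ => (1 : ℝ) / n).symm
    _ ≤ _ := (thin_iff_summable_indicator.1 hB).sum_le_tsum F
          fun _ _ => Set.indicator_nonneg (fun _ _ => by positivity) _

lemma Thin.tendsto_tsum_Ioi (hB : Thin B) :
    Tendsto (fun T : ℕ => ∑' m : ↥(B ∩ Set.Ioi T), (1 : ℝ) / m) atTop (𝓝 0) := by
  set g := B.indicator fun n : ℕ => (1 : ℝ) / n
  refine ((tendsto_sum_nat_add g).comp (tendsto_add_atTop_nat 1)).congr fun T => ?_
  have hs : Summable ((B ∩ Set.Ioi T).indicator fun n : ℕ => (1 : ℝ) / n) :=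
    thin_iff_summable_indicator.1 (hB.mono Set.inter_subset_left)
  rw [tsum_subtype (B ∩ Set.Ioi T) fun n : ℕ => (1 : ℝ) / n, ← hs.sum_add_tsum_nat_add (T + 1),
    Finset.sum_eq_zero, zero_add]
  · refine tsum_congr fun k => ?_
    simp only [g, Set.indicator, Set.mem_inter_iff, Set.mem_Ioi]
    grind
  · intro k hk
    exact Set.indicator_of_notMem (fun h => by simp at hk h; omega) _

lemma cnt_setOf_exists_dvd_le (hB : Thin B) (N : ℕ) :
    (cnt {n | ∃ m ∈ B, m ∣ n} N : ℝ) ≤ N * ∑' m : B, (1 : ℝ) / m := by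
  classical
  set F := (Finset.Icc 1 N).filter (· ∈ B)
  have hcover : {n | ∃ m ∈ B, m ∣ n} ∩ Set.Icc 1 N ⊆ ⋃ m ∈ F, {n | m ∣ n} := by
    rintro n ⟨⟨m, hm, hmn⟩, h1, hN⟩
    have hmn' := Nat.le_of_dvd h1 hmn
    have : 1 ≤ m := Nat.pos_of_dvd_of_pos hmn h1
    exact Set.mem_biUnion (by simp [F, hm]; omega) hmn
  calc (cnt {n | ∃ m ∈ B, m ∣ n} N : ℝ) ≤ ∑ m ∈ F, (cnt {n | m ∣ n} N : ℝ) := by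
        exact_mod_cast (cnt_le_cnt hcover).trans (cnt_biUnion_le F _ N)
    _ ≤ ∑ m ∈ F, (N : ℝ) * (1 / m) :=
        Finset.sum_le_sum fun m _ => (cnt_le_div_of_forall_dvd (fun _ h => h) N).trans_eq
          (mul_one_div _ _).symm
    _ ≤ N * ∑' m : B, (1 : ℝ) / m := by
        rw [← Finset.mul_sum]
        exact mul_le_mul_of_nonneg_left (hB.sum_le_tsum fun m hm => (Finset.mem_filter.1 hm).2)
          (by positivity)

lemma eventually_cnt_setOf_exists_dvd_le {E B : Set ℕ} {D : ℝ} (hE : HasDensity E D)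
    (hdiv : ∀ n ∈ E, ∀ m, m ∣ n → n / m ∈ E) (hB : Thin B) (hB0 : 0 ∉ B) {ε : ℝ} (hε : 0 < ε) :
    ∀ᶠ N : ℕ in atTop,
      (cnt {n | n ∈ E ∧ ∃ m ∈ B, m ∣ n} N : ℝ) ≤ (D * ∑' m : B, (1 : ℝ) / m + ε) * N := by
  classical
  obtain ⟨T, hT⟩ := (hB.tendsto_tsum_Ioi.eventually (ge_mem_nhds (half_pos hε))).exists
  set F := (Finset.range (T + 1)).filter (· ∈ B)
  have hF : ∀ m ∈ F, m ∈ B := fun m hm => (Finset.mem_filter.1 hm).2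
  have hpos : ∀ m ∈ F, 0 < m := fun m hm =>
    Nat.pos_of_ne_zero (ne_of_mem_of_not_mem (hF m hm) hB0)
  -- moduli up to `T` are handled by the density of `E`, the rest by the smallness of the tail
  have hcover : ∀ N, (cnt {n | n ∈ E ∧ ∃ m ∈ B, m ∣ n} N : ℝ)
      ≤ ∑ m ∈ F, (cnt E (N / m) : ℝ) + N * (ε / 2) := fun N => by
    have hsub : {n | n ∈ E ∧ ∃ m ∈ B, m ∣ n}
        ⊆ (⋃ m ∈ F, {n | n ∈ E ∧ m ∣ n}) ∪ {n | ∃ m ∈ B ∩ Set.Ioi T, m ∣ n} := by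
      rintro n ⟨hn, m, hm, hmn⟩
      rcases le_or_gt m T with hmT | hmT
      · exact Or.inl (Set.mem_biUnion (by simp [F, hm]; omega) ⟨hn, hmn⟩)
      · exact Or.inr ⟨m, ⟨hm, hmT⟩, hmn⟩
    refine (cnt_le_of_subset_union hsub N).trans (add_le_add ?_ ?_)
    · exact_mod_cast (cnt_biUnion_le F _ N).trans (Finset.sum_le_sum fun m _ =>
        cnt_dvd_le_cnt_div (fun n hn => hdiv n hn m) N)
    · exact (cnt_setOf_exists_dvd_le (hB.mono Set.inter_subset_left) N).trans
        (mul_le_mul_of_nonneg_left hT (by positivity))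
  have hlim : Tendsto (fun N : ℕ => (∑ m ∈ F, (cnt E (N / m) : ℝ)) / N) atTop
      (𝓝 (∑ m ∈ F, D / m)) := by
    simp only [Finset.sum_div]
    exact tendsto_finsetSum F fun m hm => hE.tendsto_cnt_div_const (hpos m hm)
  have hlt : ∑ m ∈ F, D / m < D * ∑' m : B, (1 : ℝ) / m + ε / 2 := by
    calc ∑ m ∈ F, D / m = D * ∑ m ∈ F, (1 : ℝ) / m := by
          rw [Finset.mul_sum]; simp only [mul_one_div]
      _ ≤ D * ∑' m : B, (1 : ℝ) / m := mul_le_mul_of_nonneg_left (hB.sum_le_tsum hF) hE.nonneg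
      _ < _ := lt_add_of_pos_right _ (half_pos hε)
  filter_upwards [hlim.eventually (gt_mem_nhds hlt), eventually_gt_atTop 0] with N hN hN0
  have hN0' : (0 : ℝ) < N := by exact_mod_cast hN0
  rw [div_lt_iff₀ hN0'] at hN
  linarith [hcover N]

end Thin

def perfectPowers : Set ℕ := {n | ∃ q k, 2 ≤ q ∧ 2 ≤ k ∧ q ^ k = n}

lemma summable_one_div_pow_add_two :
    Summable fun x : ℕ × ℕ => (1 : ℝ) / ((x.1 + 2 : ℕ) : ℝ) ^ (x.2 + 2) := by
  have hq : Summable fun q : ℕ => (1 : ℝ) / ((q + 2 : ℕ) : ℝ) ^ 2 :=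
    (summable_nat_add_iff 2).2 (Real.summable_one_div_nat_pow.2 one_lt_two)
  refine ((hq.mul_of_nonneg summable_geometric_two (fun _ => by positivity)
    fun _ => by positivity)).of_nonneg_of_le (fun _ => by positivity) fun ⟨q, k⟩ => ?_
  have h2 : (2 : ℝ) ≤ ((q + 2 : ℕ) : ℝ) := by exact_mod_cast Nat.le_add_left 2 q
  dsimp only
  rw [pow_add, ← one_div_mul_one_div, mul_comm, one_div_pow]
  exact mul_le_mul_of_nonneg_left (one_div_le_one_div_of_le (by positivity)
    (pow_le_pow_left₀ zero_le_two h2 k)) (by positivity)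

lemma thin_perfectPowers : Thin perfectPowers := by
  classical
  unfold Thin
  refine summable_of_sum_le (c := ∑' x : ℕ × ℕ, (1 : ℝ) / ((x.1 + 2 : ℕ) : ℝ) ^ (x.2 + 2))
    (fun _ => by positivity) fun u => ?_
  set U := u.map (Function.Embedding.subtype _)
  set L := U.sup id
  set G := Finset.range (L + 1) ×ˢ Finset.range (L + 1)
  have hU : U ⊆ G.image fun x : ℕ × ℕ => (x.1 + 2) ^ (x.2 + 2) := by
    intro n hn
    obtain ⟨⟨_, q, k, hq, hk, rfl⟩, -, rfl⟩ := Finset.mem_map.1 hn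
    have hnL : q ^ k ≤ L := by
      simpa [U, L] using Finset.le_sup (f := id) hn
    have hqn : q ≤ q ^ k := Nat.le_self_pow (by omega) q
    have hkn : k < q ^ k := (Nat.lt_pow_self (by omega)).trans_le (Nat.pow_le_pow_left hq k)
    refine Finset.mem_image.2 ⟨(q - 2, k - 2), Finset.mem_product.2
      ⟨Finset.mem_range.2 (by omega), Finset.mem_range.2 (by omega)⟩, ?_⟩
    simp only [Function.Embedding.subtype_apply]
    rw [Nat.sub_add_cancel hq, Nat.sub_add_cancel hk]
  calc ∑ x ∈ u, (1 : ℝ) / (x : ℕ) = ∑ n ∈ U, (1 : ℝ) / n := by simp [U]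
    _ ≤ ∑ n ∈ G.image fun x : ℕ × ℕ => (x.1 + 2) ^ (x.2 + 2), (1 : ℝ) / n :=
        Finset.sum_le_sum_of_subset_of_nonneg hU fun _ _ _ => by positivity
    _ ≤ ∑ x ∈ G, (1 : ℝ) / ((x.1 + 2 : ℕ) : ℝ) ^ (x.2 + 2) := by
        refine (Finset.sum_image_le_of_nonneg fun _ _ => by positivity).trans_eq ?_
        simp
    _ ≤ _ := summable_one_div_pow_add_two.sum_le_tsum G fun _ _ => by positivity

def sieved (A P : Set ℕ) (K : ℕ → Set ℕ) : Set ℕ :=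
  {n | 0 < n ∧ (∀ a ∈ A, ¬ a ∣ n) ∧ ∀ p ∈ P, ∀ k ∈ K p, ¬ (p ^ k ∣ n ∧ ¬ p ^ (k + 1) ∣ n)}

section Sieved

variable {A P : Set ℕ} {K : ℕ → Set ℕ} {n : ℕ}

lemma sieved_periodic {M : ℕ} (hA : ∀ a ∈ A, a ∣ M) (hPK : ∀ p ∈ P, ∀ k ∈ K p, p ^ (k + 1) ∣ M)
    (n : ℕ) (hn : 0 < n) : n ∈ sieved A P K ↔ n + M ∈ sieved A P K := by
  have hPK' : ∀ p ∈ P, ∀ k ∈ K p, p ^ k ∣ M := fun p hp k hk =>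
    (pow_dvd_pow p k.le_succ).trans (hPK p hp k hk)
  simp only [sieved, Set.mem_ofPred_eq, hn, Nat.add_pos_left hn, true_and]
  refine and_congr (forall₂_congr fun a ha => ?_) (forall₂_congr fun p hp => forall₂_congr
    fun k hk => ?_)
  · rw [Nat.dvd_add_left (hA a ha)]
  · rw [Nat.dvd_add_left (hPK' p hp k hk), Nat.dvd_add_left (hPK p hp k hk)]

lemma exists_dvd_of_notMem_sieved (hn : 0 < n) (h : n ∉ sieved A P K) :
    (∃ a ∈ A, a ∣ n) ∨ ∃ p ∈ P, ∃ k ∈ K p, p ^ k ∣ n ∧ ¬ p ^ (k + 1) ∣ n := by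
  simp only [sieved, Set.mem_ofPred_eq, hn, true_and, not_and] at h
  by_cases hA : ∃ a ∈ A, a ∣ n
  · exact Or.inl hA
  · have := h (by simpa using hA)
    push Not at this
    exact Or.inr this

def truncatedSieved (A P : Set ℕ) (K : ℕ → Set ℕ) (T : ℕ) : Set ℕ :=
  sieved (A ∩ Set.Iic T) (P ∩ Set.Iic T) fun p => K p ∩ Set.Iic T

lemma truncatedSieved_periodic (hA0 : 0 ∉ A) (hP0 : 0 ∉ P) (T n : ℕ) (hn : 0 < n) :
    n ∈ truncatedSieved A P K T ↔ n + T.factorial ^ (T + 1) ∈ truncatedSieved A P K T := by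
  refine sieved_periodic (fun a ha => ?_) (fun p hp k hk => ?_) n hn
  · exact (Nat.dvd_factorial (Nat.pos_of_ne_zero (ne_of_mem_of_not_mem ha.1 hA0)) ha.2).trans
      (dvd_pow_self _ T.succ_ne_zero)
  · exact (pow_dvd_pow_of_dvd (Nat.dvd_factorial (Nat.pos_of_ne_zero
      (ne_of_mem_of_not_mem hp.1 hP0)) hp.2) _).trans (pow_dvd_pow _ (Nat.succ_le_succ hk.2))

lemma sieved_subset_truncatedSieved (T : ℕ) : sieved A P K ⊆ truncatedSieved A P K T :=
  fun _ ⟨hn, hA, hP⟩ => ⟨hn, fun a ha => hA a ha.1, fun p hp k hk => hP p hp.1 k hk.1⟩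

end Sieved

def rough (T : ℕ) : Set ℕ := sieved {q | q.Prime ∧ q ≤ T} ∅ fun _ => ∅

section Rough

variable {T n m : ℕ}

lemma mem_rough : n ∈ rough T ↔ 0 < n ∧ ∀ q, q.Prime → q ≤ T → ¬ q ∣ n := by
  simp [rough, sieved]

lemma div_mem_rough (hn : n ∈ rough T) (hm : m ∣ n) : n / m ∈ rough T := by
  obtain ⟨hn0, hq⟩ := mem_rough.1 hn
  have hm0 : 0 < m := Nat.pos_of_dvd_of_pos hm hn0
  exact mem_rough.2 ⟨Nat.div_pos (Nat.le_of_dvd hn0 hm) hm0,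
    fun q hq' hqT hqd => hq q hq' hqT (hqd.trans (Nat.div_dvd_of_dvd hm))⟩

lemma lt_of_dvd_of_mem_rough (hn : n ∈ rough T) (hm : m ∣ n) (hm1 : m ≠ 1) : T < m := by
  obtain ⟨hn0, hq⟩ := mem_rough.1 hn
  have hm0 : 0 < m := Nat.pos_of_dvd_of_pos hm hn0
  by_contra! hmT
  exact hq m.minFac (Nat.minFac_prime hm1) ((Nat.minFac_le hm0).trans hmT)
    ((Nat.minFac_dvd m).trans hm)

lemma exists_pos_hasDensity_rough (T : ℕ) : ∃ D > 0, HasDensity (rough T) D := by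
  have hper : ∀ n, 0 < n → (n ∈ rough T ↔ n + T.factorial ∈ rough T) :=
    sieved_periodic (fun q hq => Nat.dvd_factorial hq.1.pos hq.2) (fun _ h => h.elim)
  refine ⟨_, div_pos ?_ (by exact_mod_cast T.factorial_pos),
    hasDensity_of_periodic_s2 T.factorial_pos hper⟩
  have h1 : 1 ∈ rough T ∩ Set.Icc 1 T.factorial :=
    ⟨mem_rough.2 ⟨one_pos, fun q hq _ h => hq.one_lt.ne' (Nat.dvd_one.1 h)⟩, le_rfl,
      T.factorial_pos⟩
  exact_mod_cast (Set.ncard_pos ((Set.finite_Icc _ _).inter_of_right _)).2 ⟨1, h1⟩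

end Rough

-- The perfect powers stand in for the `p ^ k` with `p ∈ P`, `k ∈ K p`, `k ≥ 2`: they form a thin
-- set whatever `P` and `K` are.
def sieveModuli (A P : Set ℕ) (K : ℕ → Set ℕ) : Set ℕ :=
  (A ∪ {p | p ∈ P ∧ 1 ∈ K p}) ∪ perfectPowers

section Moduli

variable {A P : Set ℕ} {K : ℕ → Set ℕ} {T : ℕ}

lemma pow_mem_sieveModuli {p k : ℕ} (hp : 2 ≤ p) (hpP : p ∈ P) (hk : k ∈ K p) (hk1 : 1 ≤ k) :
    p ^ k ∈ sieveModuli A P K := by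
  rcases hk1.eq_or_lt with rfl | hk2
  · exact Or.inl (Or.inr ⟨by simpa using hpP, by simpa using hk⟩)
  · exact Or.inr ⟨p, k, hp, hk2, rfl⟩

lemma truncatedSieved_subset (hP : ∀ p ∈ P, p.Prime) (hT : ∀ p ∈ P, 0 ∈ K p → p ≤ T) :
    truncatedSieved A P K T ⊆
      sieved A P K ∪ {n | ∃ m ∈ sieveModuli A P K ∩ Set.Ioi T, m ∣ n} := by
  rintro n ⟨hn, hA, hPK⟩
  by_cases hS : n ∈ sieved A P K
  · exact Or.inl hS
  refine Or.inr ?_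
  rcases exists_dvd_of_notMem_sieved hn hS with ⟨a, ha, han⟩ | ⟨p, hp, k, hk, hpk⟩
  · have hTa : T < a := by
      by_contra! haT
      exact hA a ⟨ha, haT⟩ han
    exact ⟨a, ⟨Or.inl (Or.inl ha), hTa⟩, han⟩
  · have hp2 := (hP p hp).two_le
    have hk0 : k ≠ 0 := by
      rintro rfl
      exact hPK p ⟨hp, hT p hp hk⟩ 0 ⟨hk, Nat.zero_le T⟩ hpk
    have hT : T < p ^ k := by
      by_contra! h
      exact hPK p ⟨hp, (Nat.le_self_pow hk0 p).trans h⟩ k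
        ⟨hk, ((Nat.lt_pow_self hp2).trans_le h).le⟩ hpk
    exact ⟨p ^ k, ⟨pow_mem_sieveModuli hp2 hp hk (Nat.one_le_iff_ne_zero.2 hk0), hT⟩, hpk.1⟩

lemma rough_subset (hP : ∀ p ∈ P, p.Prime) (hK0 : ∀ p ∈ P, 0 ∉ K p) (hA1 : 1 ∉ A) :
    rough T ⊆ sieved A P K ∪
      {n | n ∈ rough T ∧ ∃ m ∈ sieveModuli A P K ∩ Set.Ioi T, m ∣ n} := by
  intro n hn
  by_cases hS : n ∈ sieved A P K
  · exact Or.inl hS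
  refine Or.inr ⟨hn, ?_⟩
  rcases exists_dvd_of_notMem_sieved (mem_rough.1 hn).1 hS with
    ⟨a, ha, han⟩ | ⟨p, hp, k, hk, hpk⟩
  · exact ⟨a, ⟨Or.inl (Or.inl ha),
      lt_of_dvd_of_mem_rough hn han (ne_of_mem_of_not_mem ha hA1)⟩, han⟩
  · have hk0 : k ≠ 0 := ne_of_mem_of_not_mem hk (hK0 p hp)
    exact ⟨p ^ k, ⟨pow_mem_sieveModuli (hP p hp).two_le hp hk (Nat.one_le_iff_ne_zero.2 hk0),
      lt_of_dvd_of_mem_rough hn hpk.1 (Nat.one_lt_pow hk0 (hP p hp).one_lt).ne'⟩, hpk.1⟩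

end Moduli

section SievedDensity

variable {A P : Set ℕ} {K : ℕ → Set ℕ}

lemma hasDensity_sieved_zero (hinf : {p | p ∈ P ∧ 0 ∈ K p}.Infinite) :
    HasDensity (sieved A P K) 0 :=
  hasDensity_zero_of_forall_dvd fun C => by
    obtain ⟨p, ⟨hp, h0⟩, hCp⟩ := hinf.exists_gt C
    refine ⟨p, hCp.le, fun n ⟨_, _, hn⟩ => ?_⟩
    by_contra h
    exact hn p hp 0 h0 ⟨by simp, by simpa using h⟩

lemma exists_hasDensity_sieved (hA0 : 0 ∉ A) (hP : ∀ p ∈ P, p.Prime)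
    (hthin : Thin (sieveModuli A P K)) (hfin : {p | p ∈ P ∧ 0 ∈ K p}.Finite) :
    ∃ d, HasDensity (sieved A P K) d := by
  obtain ⟨T₀, hT₀⟩ := hfin.bddAbove
  refine exists_hasDensity_of_approx fun ε hε => ?_
  obtain ⟨T, hTε, hT⟩ := ((hthin.tendsto_tsum_Ioi.eventually (ge_mem_nhds hε)).and
    (eventually_ge_atTop T₀)).exists
  refine ⟨_, _, hasDensity_of_periodic_s2 (pow_pos T.factorial_pos _)
    (truncatedSieved_periodic hA0 (fun h => Nat.not_prime_zero (hP 0 h)) T),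
    sieved_subset_truncatedSieved T, fun N => ?_⟩
  have hsub := truncatedSieved_subset (A := A) hP fun p hp h0 => (hT₀ ⟨hp, h0⟩).trans hT
  calc (cnt (truncatedSieved A P K T) N : ℝ)
      ≤ cnt (sieved A P K) N + cnt {n | ∃ m ∈ sieveModuli A P K ∩ Set.Ioi T, m ∣ n} N :=
        cnt_le_of_subset_union hsub N
    _ ≤ cnt (sieved A P K) N + ε * N := by
        grw [cnt_setOf_exists_dvd_le (hthin.mono Set.inter_subset_left) N, hTε, mul_comm]

lemma HasDensity.sieved_pos {d : ℝ} (hd : HasDensity (sieved A P K) d)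
    (hP : ∀ p ∈ P, p.Prime) (hthin : Thin (sieveModuli A P K))
    (hK0 : ∀ p ∈ P, 0 ∉ K p) (hA1 : 1 ∉ A) : 0 < d := by
  obtain ⟨T, hT⟩ := (hthin.tendsto_tsum_Ioi.eventually (ge_mem_nhds one_half_pos)).exists
  obtain ⟨D, hD0, hD⟩ := exists_pos_hasDensity_rough T
  have hbad := eventually_cnt_setOf_exists_dvd_le (B := sieveModuli A P K ∩ Set.Ioi T) hD
    (fun _ hn _ => div_mem_rough hn) (hthin.mono Set.inter_subset_left)
    (fun h => T.not_lt_zero h.2) (by positivity : 0 < D / 4)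
  have hle : ∀ᶠ N : ℕ in atTop, (cnt (rough T) N : ℝ) / N - (D * (1 / 2) + D / 4) ≤
      (cnt (sieved A P K) N : ℝ) / N := by
    filter_upwards [hbad, eventually_gt_atTop 0] with N hN hN0
    have hN0' : (0 : ℝ) < N := by exact_mod_cast hN0
    have hcov := cnt_le_of_subset_union (rough_subset (T := T) hP hK0 hA1) N
    rw [sub_le_iff_le_add, div_add' _ _ _ hN0'.ne', div_le_div_iff_of_pos_right hN0']
    nlinarith [mul_le_mul_of_nonneg_left hT hD0.le]
  linarith [le_of_tendsto_of_tendsto (hD.sub_const _) hd hle]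

end SievedDensity

theorem sieve_by_divisors_and_exact_prime_powers
    (A : Set ℕ) (hA0 : 0 ∉ A)
    (P : Set ℕ) (hP : ∀ p ∈ P, Nat.Prime p)
    (K : ℕ → Set ℕ)
    (hthin : Thin (A ∪ {p | p ∈ P ∧ 1 ∈ K p})) :
    ∃ d : ℝ,
      HasDensity {n : ℕ | 0 < n ∧ (∀ a ∈ A, ¬ a ∣ n) ∧
        ∀ p ∈ P, ∀ k ∈ K p, ¬ (p ^ k ∣ n ∧ ¬ p ^ (k + 1) ∣ n)} d ∧
      ((∀ p ∈ P, 0 ∉ K p) → 1 ∉ A → 0 < d) := by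
  have hmod : Thin (sieveModuli A P K) := hthin.union thin_perfectPowers
  obtain ⟨d, hd⟩ : ∃ d, HasDensity (sieved A P K) d := by
    by_cases hfin : {p | p ∈ P ∧ 0 ∈ K p}.Finite
    · exact exists_hasDensity_sieved hA0 hP hmod hfin
    · exact ⟨0, hasDensity_sieved_zero hfin⟩
  exact ⟨d, hd, hd.sieved_pos hP hmod⟩
end

section
/- If ν is a multiplicative arithmetic function, then the support supp(ν) = {n : ν(n) ≠ 0} has an asymptotic density, given by ∏_p (1 - 1/p) · ∑_{k≥0, p^k ∈ supp(ν)} 1/p^k. -/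
/-!
The indicator `F` of the support of `ν` is multiplicative with values in `[0, 1]`, and for every
such `F` the mean value of `F` is `∏ₚ (1 - p⁻¹) ∑ₑ F(pᵉ) p⁻ᵉ`.

Put `g = F * μ`, so that `∑_{n ≤ N} F n = ∑_{d ≤ N} g d ⌊N / d⌋`. If `∑ |g d| / d` converges,
dominated convergence gives the mean value `∑ g d / d`, whose Euler factors are
`∑ₑ g(pᵉ) p⁻ᵉ = (1 - p⁻¹) ∑ₑ F(pᵉ) p⁻ᵉ` because `g(pᵉ⁺¹) = F(pᵉ⁺¹) - F(pᵉ)`. Absolute convergence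
follows from the convergence of `∑ₚ Wₚ`, where `Wₚ = ∑ₑ (1 - F(pᵉ)) p⁻ᵉ` bounds
`∑_{e ≥ 1} |g(pᵉ)| p⁻ᵉ` up to a factor `2`.

If `∑ₚ Wₚ` diverges, the Euler product is `0`, since its factors are `1 - (1 - p⁻¹) Wₚ`. On the
other hand `F` is bounded by the multiplicative function which agrees with `F` on the powers of
the primes of a finite set `P` and is `1` on all other prime powers; by the first case its mean
value is the finite product of the Euler factors over `P`, which is arbitrarily small.
-/

open Filter Topology ArithmeticFunction

open Finset
open scoped ArithmeticFunction.Moebius ArithmeticFunction.zeta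

namespace SupportDensity

lemma natDiv_div_le (N d : ℕ) : ((N / d : ℕ) : ℝ) / N ≤ 1 / d := by
  rcases N.eq_zero_or_pos with rfl | hN
  · simp
  rw [div_le_iff₀ (by positivity), one_div_mul_eq_div]
  exact Nat.cast_div_le

lemma tendsto_natDiv_div (d : ℕ) :
    Tendsto (fun N : ℕ => ((N / d : ℕ) : ℝ) / N) atTop (𝓝 (1 / d)) := by
  refine (tendsto_nat_floor_mul_div_atTop (a := 1 / (d : ℝ)) (by positivity)).comp
    tendsto_natCast_atTop_atTop |>.congr fun N => ?_
  simp only [Function.comp_apply, one_div_mul_eq_div, Nat.floor_div_eq_div]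

lemma tendsto_sum_mul_natDiv_div (g : ℕ → ℝ) (hg : Summable fun d => ‖g d / d‖) :
    Tendsto (fun N : ℕ => (∑ d ∈ Ioc 0 N, g d * (N / d : ℕ)) / N) atTop
      (𝓝 (∑' d, g d / d)) := by
  have hdom := tendsto_tsum_of_dominated_convergence (𝓕 := atTop)
    (f := fun N d => g d * (((N / d : ℕ) : ℝ) / N)) (g := fun d => g d / d) hg
    (fun d => by rw [div_eq_mul_one_div]; exact (tendsto_natDiv_div d).const_mul (g d))
    (Eventually.of_forall fun N d => by
      rw [norm_mul, norm_div, norm_div, Real.norm_natCast, Real.norm_natCast,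
        Real.norm_natCast, div_eq_mul_one_div (‖g d‖)]
      exact mul_le_mul_of_nonneg_left (natDiv_div_le N d) (norm_nonneg _))
  refine hdom.congr fun N => ?_
  rw [tsum_eq_sum (s := Ioc 0 N), sum_div]
  · exact sum_congr rfl fun d _ => by ring
  · intro d hd
    rw [mem_Ioc, not_and_or, not_lt, Nat.le_zero, not_le] at hd
    rcases hd with rfl | hd <;> simp [Nat.div_eq_of_lt, *]

lemma tendsto_mean_of_summable (F : ArithmeticFunction ℝ)
    (hF : Summable fun d => ‖(F * μ) d / d‖) :
    Tendsto (fun N : ℕ => (∑ n ∈ Ioc 0 N, F n) / N) atTop (𝓝 (∑' d, (F * μ) d / d)) := by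
  have hF_eq : F * μ * ζ = F := by rw [mul_assoc, coe_moebius_mul_coe_zeta, mul_one]
  refine (tendsto_sum_mul_natDiv_div _ hF).congr fun N => ?_
  rw [← sum_Ioc_mul_zeta_eq_sum, hF_eq]

section PowerSeries

variable {a b : ℕ → ℝ} {x : ℝ}

lemma summable_mul_pow_of_mem_Icc (ha : ∀ e, a e ∈ Set.Icc (0 : ℝ) 1) (hx0 : 0 ≤ x)
    (hx1 : x < 1) : Summable fun e => a e * x ^ e := by
  refine Summable.of_norm_bounded (summable_geometric_of_lt_one hx0 hx1) fun e => ?_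
  rw [norm_mul, norm_pow, Real.norm_of_nonneg hx0, Real.norm_of_nonneg (ha e).1]
  exact mul_le_of_le_one_left (pow_nonneg hx0 e) (ha e).2

lemma tsum_mul_pow_eq_one_sub_mul (hb0 : b 0 = a 0) (hb : ∀ e, b (e + 1) = a (e + 1) - a e)
    (hs : Summable fun e => a e * x ^ e) :
    ∑' e, b e * x ^ e = (1 - x) * ∑' e, a e * x ^ e := by
  have hshift : (fun e => b (e + 1) * x ^ (e + 1))
      = fun e => a (e + 1) * x ^ (e + 1) - x * (a e * x ^ e) := by
    ext e; rw [hb, pow_succ]; ring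
  have hs' : Summable fun e => a (e + 1) * x ^ (e + 1) :=
    (summable_nat_add_iff (f := fun e => a e * x ^ e) 1).2 hs
  have hb_sum : Summable fun e => b (e + 1) * x ^ (e + 1) := by
    rw [hshift]; exact hs'.sub (hs.mul_left x)
  rw [tsum_eq_zero_add' (f := fun e => b e * x ^ e) hb_sum, hshift,
    hs'.tsum_sub (hs.mul_left x), tsum_mul_left, hs.tsum_eq_zero_add, hb0]
  ring

lemma one_sub_one_sub_mul_tsum (ha : ∀ e, a e ∈ Set.Icc (0 : ℝ) 1) (hx0 : 0 ≤ x)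
    (hx1 : x < 1) :
    1 - (1 - x) * ∑' e, a e * x ^ e = (1 - x) * ∑' e, (1 - a e) * x ^ e := by
  have hsplit : ∑' e, (1 - a e) * x ^ e = (1 - x)⁻¹ - ∑' e, a e * x ^ e := by
    rw [← tsum_geometric_of_lt_one hx0 hx1,
      ← (summable_geometric_of_lt_one hx0 hx1).tsum_sub (summable_mul_pow_of_mem_Icc ha hx0 hx1)]
    exact tsum_congr fun e => by ring
  rw [hsplit, mul_sub, mul_inv_cancel₀ (by linarith)]

lemma abs_sub_mul_pow_le (ha : ∀ e, a e ∈ Set.Icc (0 : ℝ) 1) (hx0 : 0 ≤ x) (hx1 : x ≤ 1)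
    (e : ℕ) :
    |a (e + 1) - a e| * x ^ (e + 1) ≤ (1 - a (e + 1)) * x ^ (e + 1) + (1 - a e) * x ^ e := by
  calc |a (e + 1) - a e| * x ^ (e + 1)
      ≤ ((1 - a (e + 1)) + (1 - a e)) * x ^ (e + 1) := by
        gcongr
        rw [abs_le]
        constructor <;> linarith [(ha e).2, (ha (e + 1)).2]
    _ ≤ (1 - a (e + 1)) * x ^ (e + 1) + (1 - a e) * x ^ e := by
        rw [add_mul]
        exact add_le_add le_rfl (mul_le_mul_of_nonneg_left
          (pow_le_pow_of_le_one hx0 hx1 (Nat.le_succ e)) (sub_nonneg.2 (ha e).2))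

lemma summable_abs_sub_mul_pow (ha : ∀ e, a e ∈ Set.Icc (0 : ℝ) 1) (hx0 : 0 ≤ x) (hx1 : x < 1) :
    Summable fun e => |a (e + 1) - a e| * x ^ (e + 1) := by
  have hW := summable_mul_pow_of_mem_Icc (fun e => Set.Icc.one_sub_mem (ha e)) hx0 hx1
  refine .of_nonneg_of_le (fun e => by positivity) (abs_sub_mul_pow_le ha hx0 hx1.le)
    (((summable_nat_add_iff (f := fun e => (1 - a e) * x ^ e) 1).2 hW).add hW)

lemma tsum_abs_sub_mul_pow_le (ha : ∀ e, a e ∈ Set.Icc (0 : ℝ) 1) (hx0 : 0 ≤ x) (hx1 : x < 1) :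
    ∑' e, |a (e + 1) - a e| * x ^ (e + 1) ≤ 2 * ∑' e, (1 - a e) * x ^ e := by
  have hW := summable_mul_pow_of_mem_Icc (fun e => Set.Icc.one_sub_mem (ha e)) hx0 hx1
  have hW' : Summable fun e => (1 - a (e + 1)) * x ^ (e + 1) :=
    (summable_nat_add_iff (f := fun e => (1 - a e) * x ^ e) 1).2 hW
  have htail : ∑' e, (1 - a (e + 1)) * x ^ (e + 1) ≤ ∑' e, (1 - a e) * x ^ e := by
    rw [hW.tsum_eq_zero_add]
    exact le_add_of_nonneg_left (by simpa using sub_nonneg.2 (ha 0).2)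
  calc ∑' e, |a (e + 1) - a e| * x ^ (e + 1)
      ≤ ∑' e, ((1 - a (e + 1)) * x ^ (e + 1) + (1 - a e) * x ^ e) :=
        (summable_abs_sub_mul_pow ha hx0 hx1).tsum_le_tsum (abs_sub_mul_pow_le ha hx0 hx1.le)
          (hW'.add hW)
    _ = ∑' e, (1 - a (e + 1)) * x ^ (e + 1) + ∑' e, (1 - a e) * x ^ e := hW'.tsum_add hW
    _ ≤ 2 * ∑' e, (1 - a e) * x ^ e := by linarith

end PowerSeries

lemma summable_of_summable_tsum_prime_pow_succ {f : ℕ → ℝ} (hf : ∀ n, 0 ≤ f n) (hf₀ : f 0 = 0)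
    (hf₁ : f 1 = 1) (hmul : ∀ {m n : ℕ}, m.Coprime n → f (m * n) = f m * f n)
    (hp : ∀ {p : ℕ}, p.Prime → Summable fun e => f (p ^ e))
    (htail : Summable fun p : Nat.Primes => ∑' e, f ((p : ℕ) ^ (e + 1))) : Summable f := by
  refine summable_of_sum_range_le (c := Real.exp (∑' p : Nat.Primes, ∑' e, f ((p : ℕ) ^ (e + 1))))
    hf fun N => ?_
  have hsmooth := EulerProduct.summable_and_hasSum_smoothNumbers_prod_primesBelow_tsum hf₁ hmul
    (fun hp' => (hp hp').congr fun e => (Real.norm_of_nonneg (hf _)).symm) N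
  have hind : ∀ n ∈ range N, f n ≤ (N.smoothNumbers).indicator f n := fun n hn => by
    rcases n.eq_zero_or_pos with rfl | hn0
    · rw [hf₀]
      exact Set.indicator_apply_nonneg fun _ => hf 0
    · rw [Set.indicator_of_mem (Nat.mem_smoothNumbers_of_lt hn0 (mem_range.1 hn))]
  have hind_sum : Summable ((N.smoothNumbers).indicator f) := by
    rw [← summable_subtype_iff_indicator]
    exact hsmooth.1.congr fun n => Real.norm_of_nonneg (hf _)
  calc ∑ n ∈ range N, f n
      ≤ ∑' n, (N.smoothNumbers).indicator f n :=
        (sum_le_sum hind).trans (hind_sum.sum_le_tsum _ fun n _ =>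
          Set.indicator_apply_nonneg fun _ => hf n)
    _ = ∏ p ∈ N.primesBelow, (1 + ∑' e, f (p ^ (e + 1))) := by
        rw [← _root_.tsum_subtype, hsmooth.2.tsum_eq]
        refine prod_congr rfl fun p hp' => ?_
        rw [(hp (Nat.prime_of_mem_primesBelow hp')).tsum_eq_zero_add, pow_zero, hf₁]
    _ ≤ Real.exp (∑ p ∈ N.primesBelow, ∑' e, f (p ^ (e + 1))) :=
        Real.prod_one_add_le_exp_sum _ fun p => tsum_nonneg fun e => hf _
    _ ≤ Real.exp (∑' p : Nat.Primes, ∑' e, f ((p : ℕ) ^ (e + 1))) := by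
        rw [Real.exp_le_exp, ← sum_subtype_of_mem _ fun p => Nat.prime_of_mem_primesBelow]
        exact htail.sum_le_tsum (L := SummationFilter.unconditional Nat.Primes) _
          fun p _ => tsum_nonneg fun e => hf _

lemma hasProd_one_sub_zero_of_not_summable {ι : Type*} {a : ι → ℝ}
    (ha : ∀ i, a i ∈ Set.Icc (0 : ℝ) 1) (hs : ¬Summable a) :
    HasProd (fun i => 1 - a i) 0 := by
  have hsum : Tendsto (fun s : Finset ι => ∑ i ∈ s, a i) atTop atTop := by
    refine tendsto_atTop_atTop_of_monotone
      (fun s t hst => sum_le_sum_of_subset_of_nonneg hst fun i _ _ => (ha i).1) fun c => ?_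
    by_contra! h
    exact hs (summable_of_sum_le (fun i => (ha i).1) fun s => (h s).le)
  refine tendsto_of_tendsto_of_tendsto_of_le_of_le tendsto_const_nhds
    (Real.tendsto_exp_neg_atTop_nhds_zero.comp hsum)
    (fun s => prod_nonneg fun i _ => sub_nonneg.2 (ha i).2) fun s => ?_
  calc ∏ i ∈ s, (1 - a i) ≤ ∏ i ∈ s, Real.exp (-a i) :=
        prod_le_prod (fun i _ => sub_nonneg.2 (ha i).2) fun i _ => Real.one_sub_le_exp_neg _
    _ = Real.exp (-∑ i ∈ s, a i) := by rw [← Real.exp_sum, sum_neg_distrib]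

lemma factorization_eq_zero_or_of_coprime {m n : ℕ} (hmn : m.Coprime n) (p : ℕ) :
    m.factorization p = 0 ∨ n.factorization p = 0 := by
  by_contra! h
  have hp : p.Prime := Nat.prime_of_mem_primeFactors (Nat.support_factorization m ▸
    Finsupp.mem_support_iff.2 h.1)
  exact hp.one_lt.ne' (Nat.Coprime.eq_one_of_dvd (Nat.Coprime.coprime_dvd_left
    (Nat.dvd_of_factorization_pos h.1) hmn) (Nat.dvd_of_factorization_pos h.2))

section Truncate

variable {R : Type*} [CommMonoidWithZero R]

noncomputable def truncate (F : ArithmeticFunction R) (P : Finset ℕ) : ArithmeticFunction R :=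
  ⟨fun n => if n = 0 then 0 else ∏ p ∈ P, F (p ^ n.factorization p), if_pos rfl⟩

variable {F : ArithmeticFunction R} {P : Finset ℕ}

lemma truncate_apply {n : ℕ} (hn : n ≠ 0) :
    truncate F P n = ∏ p ∈ P, F (p ^ n.factorization p) :=
  if_neg hn

lemma isMultiplicative_truncate (hF : F.IsMultiplicative) : (truncate F P).IsMultiplicative := by
  refine IsMultiplicative.iff_ne_zero.2 ⟨by simp [truncate_apply, hF.map_one], ?_⟩
  intro m n hm hn hmn
  rw [truncate_apply (mul_ne_zero hm hn), truncate_apply hm, truncate_apply hn,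
    ← prod_mul_distrib]
  refine prod_congr rfl fun p _ => ?_
  rw [Nat.factorization_mul_apply_of_coprime hmn]
  rcases factorization_eq_zero_or_of_coprime hmn p with h | h <;> simp [h, hF.map_one]

lemma truncate_prime_pow (hF : F.IsMultiplicative) {q : ℕ} (hq : q.Prime) (e : ℕ) :
    truncate F P (q ^ e) = if q ∈ P then F (q ^ e) else 1 := by
  rw [truncate_apply (pow_ne_zero e hq.ne_zero), hq.factorization_pow]
  split_ifs with hqP
  · rw [prod_eq_single_of_mem q hqP fun p _ hpq => by simp [Ne.symm hpq, hF.map_one]]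
    simp
  · exact prod_eq_one fun p hp => by simp [show q ≠ p from fun h => hqP (h ▸ hp), hF.map_one]

end Truncate

section EulerFactor

variable {F : ArithmeticFunction ℝ} {p : ℕ} {P : Finset ℕ}

/-- The mean value of `n ↦ F (p ^ n.factorization p)`: the `n` with `n.factorization p = e` have
density `(1 - p⁻¹) p⁻ᵉ`. -/
noncomputable def eulerFactor (F : ArithmeticFunction ℝ) (p : ℕ) : ℝ :=
  (1 - (p : ℝ)⁻¹) * ∑' e, F (p ^ e) * (p : ℝ)⁻¹ ^ e

noncomputable def eulerDeficit (F : ArithmeticFunction ℝ) (p : ℕ) : ℝ :=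
  ∑' e, (1 - F (p ^ e)) * (p : ℝ)⁻¹ ^ e

lemma mul_moebius_apply_prime_pow_succ {R : Type*} [CommRing R] (F : ArithmeticFunction R)
    (hp : p.Prime) (e : ℕ) : (F * μ) (p ^ (e + 1)) = F (p ^ (e + 1)) - F (p ^ e) := by
  have hsum : ∀ k, F (p ^ k) = ∑ j ∈ range (k + 1), (F * μ) (p ^ j) := fun k => by
    rw [← Nat.sum_divisors_prime_pow hp, ← coe_mul_zeta_apply, mul_assoc,
      coe_moebius_mul_coe_zeta, mul_one]
  rw [hsum (e + 1), hsum e, sum_range_succ, add_sub_cancel_left]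

lemma mul_moebius_div_mul_of_coprime (hF : F.IsMultiplicative) {m n : ℕ} (hmn : m.Coprime n) :
    (F * μ) (m * n) / ((m * n : ℕ) : ℝ) = (F * μ) m / m * ((F * μ) n / n) := by
  rw [(hF.mul isMultiplicative_moebius.intCast).map_mul_of_coprime hmn, Nat.cast_mul,
    mul_div_mul_comm]

lemma norm_mul_moebius_prime_pow_succ_div (hp : p.Prime) (e : ℕ) :
    ‖(F * μ) (p ^ (e + 1)) / ((p ^ (e + 1) : ℕ) : ℝ)‖
      = |F (p ^ (e + 1)) - F (p ^ e)| * (p : ℝ)⁻¹ ^ (e + 1) := by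
  rw [mul_moebius_apply_prime_pow_succ F hp, norm_div, Real.norm_eq_abs, Real.norm_natCast,
    Nat.cast_pow, div_eq_mul_inv, inv_pow]

lemma inv_natCast_mem_Ico (hp : 1 < p) : (p : ℝ)⁻¹ ∈ Set.Ico 0 1 :=
  ⟨by positivity, inv_lt_one_of_one_lt₀ (by exact_mod_cast hp)⟩

lemma one_sub_eulerFactor (hF01 : ∀ n, F n ∈ Set.Icc (0 : ℝ) 1) (hp : 1 < p) :
    1 - eulerFactor F p = (1 - (p : ℝ)⁻¹) * eulerDeficit F p :=
  one_sub_one_sub_mul_tsum (fun _ => hF01 _) (inv_natCast_mem_Ico hp).1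
    (inv_natCast_mem_Ico hp).2

lemma eulerDeficit_nonneg (hF01 : ∀ n, F n ∈ Set.Icc (0 : ℝ) 1) (p : ℕ) :
    0 ≤ eulerDeficit F p :=
  tsum_nonneg fun e => mul_nonneg (sub_nonneg.2 (hF01 _).2) (by positivity)

lemma eulerFactor_mem_Icc (hF01 : ∀ n, F n ∈ Set.Icc (0 : ℝ) 1) (hp : 1 < p) :
    eulerFactor F p ∈ Set.Icc (0 : ℝ) 1 := by
  have hx := inv_natCast_mem_Ico hp
  refine ⟨mul_nonneg (by linarith [hx.2]) (tsum_nonneg fun e => ?_), ?_⟩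
  · exact mul_nonneg (hF01 _).1 (pow_nonneg hx.1 e)
  · have := one_sub_eulerFactor hF01 hp
    nlinarith [eulerDeficit_nonneg hF01 p, hx.2]

lemma tsum_mul_moebius_prime_pow_div (hF : F.IsMultiplicative)
    (hF01 : ∀ n, F n ∈ Set.Icc (0 : ℝ) 1) (hp : p.Prime) :
    ∑' e, (F * μ) (p ^ e) / ((p ^ e : ℕ) : ℝ) = eulerFactor F p := by
  have hx := inv_natCast_mem_Ico hp.one_lt
  simp_rw [Nat.cast_pow, div_eq_mul_inv, ← inv_pow]
  exact tsum_mul_pow_eq_one_sub_mul (a := fun e => F (p ^ e)) (b := fun e => (F * μ) (p ^ e))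
    (by simp [hF.map_one])
    (mul_moebius_apply_prime_pow_succ F hp)
    (summable_mul_pow_of_mem_Icc (fun _ => hF01 _) hx.1 hx.2)

lemma summable_norm_mul_moebius_prime_pow_div (hF01 : ∀ n, F n ∈ Set.Icc (0 : ℝ) 1)
    (hp : p.Prime) : Summable fun e => ‖(F * μ) (p ^ e) / ((p ^ e : ℕ) : ℝ)‖ := by
  have hx := inv_natCast_mem_Ico hp.one_lt
  have h : Summable fun e => ‖(F * μ) (p ^ (e + 1)) / ((p ^ (e + 1) : ℕ) : ℝ)‖ := by
    simp_rw [norm_mul_moebius_prime_pow_succ_div hp]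
    exact summable_abs_sub_mul_pow (a := fun e => F (p ^ e)) (fun _ => hF01 _) hx.1 hx.2
  exact (summable_nat_add_iff (f := fun e => ‖(F * μ) (p ^ e) / ((p ^ e : ℕ) : ℝ)‖) 1).1 h

lemma tsum_norm_mul_moebius_prime_pow_succ_div_le (hF01 : ∀ n, F n ∈ Set.Icc (0 : ℝ) 1)
    (hp : p.Prime) :
    ∑' e, ‖(F * μ) (p ^ (e + 1)) / ((p ^ (e + 1) : ℕ) : ℝ)‖ ≤ 2 * eulerDeficit F p := by
  have hx := inv_natCast_mem_Ico hp.one_lt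
  simp_rw [norm_mul_moebius_prime_pow_succ_div hp]
  exact tsum_abs_sub_mul_pow_le (a := fun e => F (p ^ e)) (fun _ => hF01 _) hx.1 hx.2

lemma summable_norm_mul_moebius_div (hF : F.IsMultiplicative)
    (hF01 : ∀ n, F n ∈ Set.Icc (0 : ℝ) 1)
    (hW : Summable fun p : Nat.Primes => eulerDeficit F p) :
    Summable fun d => ‖(F * μ) d / d‖ := by
  refine summable_of_summable_tsum_prime_pow_succ (fun _ => norm_nonneg _) (by simp)
    (by simp [hF.map_one]) (fun hmn => by rw [mul_moebius_div_mul_of_coprime hF hmn, norm_mul])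
    (fun hp => by simpa using summable_norm_mul_moebius_prime_pow_div hF01 hp) ?_
  refine .of_nonneg_of_le (fun p => tsum_nonneg fun _ => norm_nonneg _) (fun p => ?_)
    (hW.mul_left 2)
  simpa using tsum_norm_mul_moebius_prime_pow_succ_div_le hF01 p.prop

lemma hasProd_eulerFactor (hF : F.IsMultiplicative) (hF01 : ∀ n, F n ∈ Set.Icc (0 : ℝ) 1)
    (hsum : Summable fun d => ‖(F * μ) d / d‖) :
    HasProd (fun p : Nat.Primes => eulerFactor F p) (∑' d, (F * μ) d / d) := by
  have h := EulerProduct.eulerProduct_hasProd (f := fun d => (F * μ) d / d)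
    (by simp [hF.map_one]) (mul_moebius_div_mul_of_coprime hF) hsum (by simp)
  simpa only [fun p : Nat.Primes => tsum_mul_moebius_prime_pow_div hF hF01 p.prop] using h

theorem tendsto_mean_of_summable_eulerDeficit (hF : F.IsMultiplicative)
    (hF01 : ∀ n, F n ∈ Set.Icc (0 : ℝ) 1)
    (hW : Summable fun p : Nat.Primes => eulerDeficit F p) :
    Tendsto (fun N : ℕ => (∑ n ∈ Ioc 0 N, F n) / N) atTop
      (𝓝 (∏' p : Nat.Primes, eulerFactor F p)) := by
  have hsum := summable_norm_mul_moebius_div hF hF01 hW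
  rw [(hasProd_eulerFactor hF hF01 hsum).tprod_eq]
  exact tendsto_mean_of_summable F hsum

lemma hasProd_eulerFactor_zero (hF01 : ∀ n, F n ∈ Set.Icc (0 : ℝ) 1)
    (hW : ¬Summable fun p : Nat.Primes => eulerDeficit F p) :
    HasProd (fun p : Nat.Primes => eulerFactor F p) 0 := by
  have hmem := fun p : Nat.Primes => eulerFactor_mem_Icc hF01 p.prop.one_lt
  have h := hasProd_one_sub_zero_of_not_summable (a := fun p : Nat.Primes => 1 - eulerFactor F p)
    (fun p => Set.Icc.one_sub_mem (hmem p)) fun hs => hW ?_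
  · simpa using h
  refine .of_nonneg_of_le (fun p => eulerDeficit_nonneg hF01 p) (fun p => ?_) (hs.mul_left 2)
  have hp : (p : ℝ)⁻¹ ≤ 2⁻¹ := inv_anti₀ two_pos (by exact_mod_cast p.prop.two_le)
  rw [one_sub_eulerFactor hF01 p.prop.one_lt]
  nlinarith [eulerDeficit_nonneg hF01 p]

lemma truncate_mem_Icc (hF01 : ∀ n, F n ∈ Set.Icc (0 : ℝ) 1) (n : ℕ) :
    truncate F P n ∈ Set.Icc (0 : ℝ) 1 := by
  rcases eq_or_ne n 0 with rfl | hn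
  · simp
  rw [truncate_apply hn]
  exact ⟨prod_nonneg fun p _ => (hF01 _).1,
    prod_le_one (fun p _ => (hF01 _).1) fun p _ => (hF01 _).2⟩

lemma le_truncate (hF : F.IsMultiplicative) (hF01 : ∀ n, F n ∈ Set.Icc (0 : ℝ) 1) (n : ℕ) :
    F n ≤ truncate F P n := by
  rcases eq_or_ne n 0 with rfl | hn
  · simp
  have hF_prod : F n = ∏ p ∈ P ∪ n.primeFactors, F (p ^ n.factorization p) := by
    rw [hF.multiplicative_factorization F hn]
    exact Finsupp.prod_of_support_subset _ (Nat.support_factorization n ▸ subset_union_right) _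
      fun _ _ => by simp [hF.map_one]
  rw [hF_prod, truncate_apply hn, ← union_sdiff_self_eq_union, prod_union disjoint_sdiff]
  exact mul_le_of_le_one_right (prod_nonneg fun p _ => (hF01 _).1)
    (prod_le_one (fun p _ => (hF01 _).1) fun p _ => (hF01 _).2)

lemma eulerDeficit_truncate_of_notMem (hF : F.IsMultiplicative) {q : ℕ} (hq : q.Prime)
    (hqP : q ∉ P) : eulerDeficit (truncate F P) q = 0 := by
  simp [eulerDeficit, truncate_prime_pow hF hq, hqP]

lemma eulerFactor_truncate (hF : F.IsMultiplicative) (hF01 : ∀ n, F n ∈ Set.Icc (0 : ℝ) 1)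
    {q : ℕ} (hq : q.Prime) :
    eulerFactor (truncate F P) q = if q ∈ P then eulerFactor F q else 1 := by
  split_ifs with hqP
  · simp only [eulerFactor, truncate_prime_pow hF hq, if_pos hqP]
  · have := one_sub_eulerFactor (truncate_mem_Icc (P := P) hF01) hq.one_lt
    rw [eulerDeficit_truncate_of_notMem hF hq hqP, mul_zero] at this
    linarith

theorem tendsto_mean_zero_of_not_summable_eulerDeficit (hF : F.IsMultiplicative)
    (hF01 : ∀ n, F n ∈ Set.Icc (0 : ℝ) 1)
    (hW : ¬Summable fun p : Nat.Primes => eulerDeficit F p) :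
    Tendsto (fun N : ℕ => (∑ n ∈ Ioc 0 N, F n) / N) atTop (𝓝 0) := by
  refine tendsto_order.2 ⟨fun c hc => .of_forall fun N => hc.trans_le
    (div_nonneg (sum_nonneg fun n _ => (hF01 n).1) N.cast_nonneg), fun ε hε => ?_⟩
  obtain ⟨s, hs⟩ := ((hasProd_eulerFactor_zero hF01 hW).eventually (gt_mem_nhds hε)).exists
  set P : Finset ℕ := s.map (Function.Embedding.subtype _)
  have hP_mem : ∀ p : Nat.Primes, (p : ℕ) ∈ P ↔ p ∈ s := fun p => mem_map' _
  have hP : ∏' p : Nat.Primes, eulerFactor (truncate F P) p = ∏ p ∈ s, eulerFactor F p := by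
    rw [tprod_eq_prod fun p hp => by
      rw [eulerFactor_truncate hF hF01 p.prop, if_neg ((hP_mem p).not.2 hp)]]
    exact prod_congr rfl fun p hp => by
      rw [eulerFactor_truncate hF hF01 p.prop, if_pos ((hP_mem p).2 hp)]
  have htrunc := tendsto_mean_of_summable_eulerDeficit (isMultiplicative_truncate hF)
    (truncate_mem_Icc hF01) (summable_of_ne_finset_zero (s := s) fun p hp =>
      eulerDeficit_truncate_of_notMem hF p.prop ((hP_mem p).not.2 hp))
  rw [hP] at htrunc
  filter_upwards [htrunc.eventually (gt_mem_nhds hs)] with N hN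
  refine lt_of_le_of_lt ?_ hN
  gcongr with n
  exact le_truncate hF hF01 n

theorem tendsto_mean_of_isMultiplicative (hF : F.IsMultiplicative)
    (hF01 : ∀ n, F n ∈ Set.Icc (0 : ℝ) 1) :
    Tendsto (fun N : ℕ => (∑ n ∈ Ioc 0 N, F n) / N) atTop
      (𝓝 (∏' p : Nat.Primes, eulerFactor F p)) := by
  by_cases hW : Summable fun p : Nat.Primes => eulerDeficit F p
  · exact tendsto_mean_of_summable_eulerDeficit hF hF01 hW
  · rw [(hasProd_eulerFactor_zero hF01 hW).tprod_eq]
    exact tendsto_mean_zero_of_not_summable_eulerDeficit hF hF01 hW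

end EulerFactor

section SupportIndicator

variable {R : Type*}

noncomputable def supportIndicator [Zero R] (ν : ArithmeticFunction R) : ArithmeticFunction ℝ :=
  ⟨(Function.support ν).indicator 1, by simp⟩

lemma supportIndicator_apply [Zero R] (ν : ArithmeticFunction R) (n : ℕ) :
    supportIndicator ν n = (Function.support ν).indicator 1 n :=
  rfl

lemma supportIndicator_mem_Icc [Zero R] (ν : ArithmeticFunction R) (n : ℕ) :
    supportIndicator ν n ∈ Set.Icc (0 : ℝ) 1 := by
  by_cases h : ν n = 0 <;> simp [supportIndicator_apply, h]

lemma isMultiplicative_supportIndicator [MonoidWithZero R] [NoZeroDivisors R] [Nontrivial R]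
    {ν : ArithmeticFunction R} (hν : ν.IsMultiplicative) :
    (supportIndicator ν).IsMultiplicative := by
  refine ⟨by simp [supportIndicator_apply, hν.map_one], fun {m n} hmn => ?_⟩
  by_cases hm : ν m = 0 <;> by_cases hn : ν n = 0 <;>
    simp [supportIndicator_apply, hν.map_mul_of_coprime hmn, hm, hn]

lemma cnt_eq_sum_supportIndicator [Zero R] (ν : ArithmeticFunction R) (N : ℕ) :
    (cnt {n | ν n ≠ 0} N : ℝ) = ∑ n ∈ Ioc 0 N, supportIndicator ν n := by
  classical
  have hset : {n | ν n ≠ 0} ∩ Set.Icc 1 N = ↑({n ∈ Ioc 0 N | ν n ≠ 0}) := by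
    ext n
    simp [Nat.lt_iff_add_one_le, and_comm]
  rw [cnt, hset, Set.ncard_coe_finset, card_filter, Nat.cast_sum]
  refine sum_congr rfl fun n _ => ?_
  by_cases h : ν n = 0 <;> simp [supportIndicator_apply, h]

lemma eulerFactor_supportIndicator [Zero R] (ν : ArithmeticFunction R) (p : ℕ) :
    eulerFactor (supportIndicator ν) p
      = (1 - 1 / (p : ℝ)) * ∑' k : {k : ℕ // ν (p ^ k) ≠ 0}, 1 / (p : ℝ) ^ (k : ℕ) := by
  have h : ∑' k : {k : ℕ // ν (p ^ k) ≠ 0}, 1 / (p : ℝ) ^ (k : ℕ)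
      = ∑' e, {k | ν (p ^ k) ≠ 0}.indicator (fun k => 1 / (p : ℝ) ^ k) e :=
    _root_.tsum_subtype {k | ν (p ^ k) ≠ 0} fun k => 1 / (p : ℝ) ^ k
  rw [h, eulerFactor, one_div (p : ℝ)]
  congr 1
  refine tsum_congr fun e => ?_
  by_cases h : ν (p ^ e) = 0 <;> simp [supportIndicator_apply, h]

end SupportIndicator

end SupportDensity

theorem support_of_multiplicative_has_density
    (ν : ArithmeticFunction ℂ) (hν : ν.IsMultiplicative) :
    HasDensity {n : ℕ | ν n ≠ 0}
      (∏' p : Nat.Primes,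
        (1 - 1 / (p : ℝ)) * ∑' k : {k : ℕ // ν ((p : ℕ) ^ k) ≠ 0}, 1 / (p : ℝ) ^ (k : ℕ)) := by
  have h := SupportDensity.tendsto_mean_of_isMultiplicative
    (SupportDensity.isMultiplicative_supportIndicator hν)
    (SupportDensity.supportIndicator_mem_Icc ν)
  simp only [← SupportDensity.cnt_eq_sum_supportIndicator,
    SupportDensity.eulerFactor_supportIndicator] at h
  exact h
end

section
/- Let ν be a multiplicative arithmetic function whose support has positive asymptotic density, and let f, g be arithmetic functions with g = f * ν (Dirichlet convolution), not both identically zero. Then supp(f) and supp(g) cannot both be thin. -/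
/-!
Let `a` be the least element of `supp f` and choose `k > a` with
`σ(a) · ∑_{x ∈ supp f, x ≥ k} 1/x ≤ 1/2`. Let `m ∈ supp ν` have all prime factors `≥ k`, so that
`a` and `m` are coprime. A term `f(x) ν(e)` of `(f * ν)(a m)` other than `f(a) ν(m)` can only be
nonzero if `x = d d'` with `d ∣ a` and `1 < d' ∣ m` (minimality of `a` excludes `d' = 1`), hence
`x ≥ k`, and then `d m = x m'` with `m' = m / d' ∈ supp ν`. By the choice of `k` these exceptional
`m` carry at most half of the reciprocal mass, and the others satisfy `g(a m) = f(a) ν(m) ≠ 0`; so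
the `k`-rough part of `supp ν` has reciprocal sum at most `2a ∑_{n ∈ supp g} 1/n`. Every
`n ∈ supp ν` is a `k`-smooth number times a `k`-rough element of `supp ν`, and the `k`-smooth
numbers are thin (Euler product), so `supp ν` would be thin, which a set of positive density is not.
-/

open Filter Topology ArithmeticFunction

open Set Function
open scoped ENNReal Pointwise

-- Sums in `ℝ≥0∞` need no summability side conditions, but `(0 : ℝ≥0∞)⁻¹ = ⊤`.
noncomputable def recipMass (X : Set ℕ) : ℝ≥0∞ := ∑' n : X, (n : ℝ≥0∞)⁻¹

lemma recipMass_eq_tsum_indicator (X : Set ℕ) :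
    recipMass X = ∑' n, X.indicator (fun n : ℕ => (n : ℝ≥0∞)⁻¹) n :=
  tsum_subtype X fun n : ℕ => (n : ℝ≥0∞)⁻¹

lemma recipMass_mono {X Y : Set ℕ} (h : X ⊆ Y) : recipMass X ≤ recipMass Y :=
  ENNReal.tsum_mono_subtype (fun n : ℕ => (n : ℝ≥0∞)⁻¹) h

lemma recipMass_union_le (X Y : Set ℕ) : recipMass (X ∪ Y) ≤ recipMass X + recipMass Y :=
  ENNReal.tsum_union_le (fun n : ℕ => (n : ℝ≥0∞)⁻¹) X Y

lemma recipMass_biUnion_le {ι : Type*} (s : Finset ι) (X : ι → Set ℕ) :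
    recipMass (⋃ i ∈ s, X i) ≤ ∑ i ∈ s, recipMass (X i) :=
  ENNReal.tsum_biUnion_le (fun n : ℕ => (n : ℝ≥0∞)⁻¹) s X

lemma recipMass_le_tsum_of_injective {X : Set ℕ} {β : Type*} {φ : X → β}
    (hφ : φ.Injective) {w : β → ℝ≥0∞} (hw : ∀ n : X, ((n : ℕ) : ℝ≥0∞)⁻¹ ≤ w (φ n)) :
    recipMass X ≤ ∑' b, w b :=
  (ENNReal.tsum_le_tsum hw).trans (ENNReal.tsum_comp_le_tsum_of_injective hφ w)

lemma inv_natCast_mul (m n : ℕ) :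
    (((m * n : ℕ) : ℝ≥0∞))⁻¹ = (m : ℝ≥0∞)⁻¹ * (n : ℝ≥0∞)⁻¹ := by
  rw [Nat.cast_mul, ENNReal.mul_inv (.inr (ENNReal.natCast_ne_top n))
    (.inl (ENNReal.natCast_ne_top m))]

lemma recipMass_mul_le (X Y : Set ℕ) : recipMass (X * Y) ≤ recipMass X * recipMass Y := by
  have h (n : ↥(X * Y)) : ∃ p : X × Y, (p.1 : ℕ) * p.2 = n := by
    obtain ⟨x, hx, y, hy, hxy⟩ := mem_mul.mp n.2
    exact ⟨(⟨x, hx⟩, ⟨y, hy⟩), hxy⟩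
  choose φ hφ using h
  calc recipMass (X * Y)
      ≤ ∑' p : X × Y, ((p.1 : ℕ) : ℝ≥0∞)⁻¹ * ((p.2 : ℕ) : ℝ≥0∞)⁻¹ := by
        refine recipMass_le_tsum_of_injective (φ := φ) (fun n n' h => Subtype.ext ?_) fun n => ?_
        · rw [← hφ n, ← hφ n', h]
        · rw [← inv_natCast_mul, hφ]
    _ = recipMass X * recipMass Y := by
        rw [ENNReal.tsum_prod', recipMass, recipMass, ← ENNReal.tsum_mul_right]
        simp only [ENNReal.tsum_mul_left]

lemma recipMass_preimage_mul_le {a : ℕ} (ha : a ≠ 0) (X : Set ℕ) :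
    recipMass ((a * ·) ⁻¹' X) ≤ a * recipMass X := by
  refine (recipMass_le_tsum_of_injective (φ := fun m => (⟨a * m, m.2⟩ : X))
    (w := fun n => (a : ℝ≥0∞) * ((n : ℕ) : ℝ≥0∞)⁻¹)
    (fun m m' h => Subtype.ext (Nat.eq_of_mul_eq_mul_left (Nat.pos_of_ne_zero ha)
      (congrArg Subtype.val h))) fun m => ?_).trans_eq ENNReal.tsum_mul_left
  rw [inv_natCast_mul, ← mul_assoc, ENNReal.mul_inv_cancel (by exact_mod_cast ha)
    (ENNReal.natCast_ne_top a), one_mul]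

lemma recipMass_ne_top_of_thin {X : Set ℕ} (h0 : 0 ∉ X) (hX : Thin X) : recipMass X ≠ ⊤ := by
  have hofReal (n : X) : ENNReal.ofReal (1 / (n : ℝ)) = ((n : ℕ) : ℝ≥0∞)⁻¹ := by
    have : (n : ℕ) ≠ 0 := fun h => h0 (h ▸ n.2)
    rw [one_div, ENNReal.ofReal_inv_of_pos (by positivity), ENNReal.ofReal_natCast]
  rw [recipMass, ← tsum_congr hofReal, ← ENNReal.ofReal_tsum_of_nonneg (fun _ => by positivity) hX]
  exact ENNReal.ofReal_ne_top

lemma recipMass_inter_Iic_ne_top {X : Set ℕ} (h0 : 0 ∉ X) (N : ℕ) :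
    recipMass (X ∩ Iic N) ≠ ⊤ := by
  have := ((finite_Iic N).inter_of_right X).to_subtype
  exact recipMass_ne_top_of_thin (fun h => h0 h.1) Summable.of_finite

lemma recipMass_le_of_forall_inter_Iic_le {X : Set ℕ} {c : ℝ≥0∞}
    (h : ∀ N, recipMass (X ∩ Iic N) ≤ c) : recipMass X ≤ c := by
  rw [recipMass_eq_tsum_indicator]
  refine ENNReal.tsum_le_of_sum_range_le fun N => ?_
  calc ∑ n ∈ Finset.range N, X.indicator (fun n : ℕ => (n : ℝ≥0∞)⁻¹) n
      = ∑ n ∈ Finset.range N, (X ∩ Iic N).indicator (fun n : ℕ => (n : ℝ≥0∞)⁻¹) n := by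
        refine Finset.sum_congr rfl fun n hn => ?_
        rw [inter_comm, ← indicator_indicator,
          indicator_of_mem (show n ∈ Iic N from (Finset.mem_range.mp hn).le)]
    _ ≤ c := (ENNReal.sum_le_tsum _).trans ((recipMass_eq_tsum_indicator _).symm.trans_le (h N))

lemma tendsto_recipMass_inter_Ici {X : Set ℕ} (hX : recipMass X ≠ ⊤) :
    Tendsto (fun k => recipMass (X ∩ Ici k)) atTop (𝓝 0) := by
  rw [recipMass_eq_tsum_indicator] at hX
  refine tendsto_of_tendsto_of_tendsto_of_le_of_le tendsto_const_nhds
    (ENNReal.tendsto_sum_nat_add _ hX) (fun _ => bot_le) fun k => ?_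
  refine recipMass_le_tsum_of_injective (φ := fun n => (n : ℕ) - k) (fun n n' h => ?_) fun n => ?_
  · have := n.2.2
    have := n'.2.2
    simp only [mem_Ici] at *
    exact Subtype.ext (by omega)
  · rw [Nat.sub_add_cancel n.2.2, indicator_of_mem n.2.1]

lemma exists_lt_mul_recipMass_inter_Ici_le {X : Set ℕ} (hX : recipMass X ≠ ⊤) (a c : ℕ)
    {ε : ℝ≥0∞} (hε : 0 < ε) : ∃ k, a < k ∧ (c : ℝ≥0∞) * recipMass (X ∩ Ici k) ≤ ε := by
  have := ENNReal.Tendsto.const_mul (tendsto_recipMass_inter_Ici hX)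
    (.inr (ENNReal.natCast_ne_top c))
  rw [mul_zero] at this
  exact ((eventually_gt_atTop a).and (this.eventually (eventually_le_nhds hε))).exists

lemma ncard_le_mul_recipMass {X : Set ℕ} {N : ℕ} (h : X ⊆ Icc 1 N) :
    (X.ncard : ℝ≥0∞) ≤ N * recipMass X := by
  calc (X.ncard : ℝ≥0∞) = ∑' _ : X, 1 := by
        rw [ENNReal.tsum_set_const, ← ((finite_Icc 1 N).subset h).cast_ncard_eq]; simp
    _ ≤ ∑' n : X, (N : ℝ≥0∞) * ((n : ℕ) : ℝ≥0∞)⁻¹ := by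
        refine ENNReal.tsum_le_tsum fun n => ?_
        obtain ⟨h1, hN⟩ := h n.2
        rw [← div_eq_mul_inv, ENNReal.le_div_iff_mul_le (by simp; omega) (by simp), one_mul]
        exact_mod_cast hN
    _ = N * recipMass X := ENNReal.tsum_mul_left

lemma cnt_le_add_mul_recipMass (S : Set ℕ) (k N : ℕ) :
    (cnt S N : ℝ≥0∞) ≤ k + N * recipMass (S ∩ Ici k) := by
  have hcover : S ∩ Icc 1 N ⊆ Iio k ∪ (S ∩ Ici k ∩ Icc 1 N) := by
    rintro n ⟨hS, hn⟩
    rcases lt_or_ge n k with h | h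
    · exact Or.inl h
    · exact Or.inr ⟨⟨hS, h⟩, hn⟩
  calc (cnt S N : ℝ≥0∞) ≤ ((Iio k).ncard + (S ∩ Ici k ∩ Icc 1 N).ncard : ℕ) := by
        exact_mod_cast (ncard_le_ncard hcover ((finite_Iio k).union
          ((finite_Icc 1 N).inter_of_right _))).trans (ncard_union_le _ _)
    _ ≤ k + N * recipMass (S ∩ Ici k ∩ Icc 1 N) := by
        rw [Nat.cast_add, ncard_Iio_nat]
        gcongr
        exact ncard_le_mul_recipMass inter_subset_right
    _ ≤ k + N * recipMass (S ∩ Ici k) := by gcongr; exact recipMass_mono inter_subset_left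

lemma recipMass_eq_top_of_hasDensity {S : Set ℕ} {d : ℝ} (hd : 0 < d) (hS : HasDensity S d) :
    recipMass S = ⊤ := by
  by_contra hS_fin
  suffices ∀ k, ENNReal.ofReal d ≤ recipMass (S ∩ Ici k) by
    have := ge_of_tendsto' (tendsto_recipMass_inter_Ici hS_fin) this
    simp only [nonpos_iff_eq_zero, ENNReal.ofReal_eq_zero] at this
    linarith
  intro k
  have hfin : recipMass (S ∩ Ici k) ≠ ⊤ :=
    ne_top_of_le_ne_top hS_fin (recipMass_mono inter_subset_left)
  set t := (recipMass (S ∩ Ici k)).toReal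
  have hbound (N : ℕ) : (cnt S N : ℝ) ≤ k + N * t := by
    have := ENNReal.toReal_mono (by finiteness) (cnt_le_add_mul_recipMass S k N)
    rwa [ENNReal.toReal_add (by finiteness) (by finiteness), ENNReal.toReal_mul,
      ENNReal.toReal_natCast, ENNReal.toReal_natCast, ENNReal.toReal_natCast] at this
  have hlim : Tendsto (fun N : ℕ => (k : ℝ) / N + t) atTop (𝓝 t) := by
    simpa using (tendsto_const_div_atTop_nhds_zero_nat (k : ℝ)).add_const t
  have hdt : d ≤ t := le_of_tendsto_of_tendsto hS hlim <| by
    filter_upwards [eventually_gt_atTop 0] with N hN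
    rw [div_add' _ _ _ (by positivity)]
    exact div_le_div_of_nonneg_right (by linarith [hbound N]) (by positivity)
  rw [← ENNReal.ofReal_toReal hfin]
  exact ENNReal.ofReal_le_ofReal hdt

namespace Nat

lemma one_mem_smoothNumbers (k : ℕ) : 1 ∈ smoothNumbers k :=
  mem_smoothNumbers'.mpr fun _ hp h => absurd h hp.not_dvd_one

lemma thin_smoothNumbers (k : ℕ) : Thin (smoothNumbers k) := by
  let recipHom : ℕ →* ℝ := invMonoidHom.comp (castRingHom ℝ)
  have hlt {p : ℕ} (hp : p.Prime) : ‖recipHom p‖ < 1 := by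
    have : (1 : ℝ) < p := by exact_mod_cast hp.one_lt
    simpa [recipHom, abs_of_nonneg] using inv_lt_one_of_one_lt₀ this
  refine (EulerProduct.summable_and_hasSum_smoothNumbers_prod_primesBelow_geometric hlt k).1.congr
    fun n => ?_
  simp [recipHom]

def roughNumbers (k : ℕ) : Set ℕ := {m | m ≠ 0 ∧ ∀ p, p.Prime → p ∣ m → k ≤ p}

lemma one_mem_roughNumbers (k : ℕ) : 1 ∈ roughNumbers k :=
  ⟨one_ne_zero, fun _ hp h => absurd h hp.not_dvd_one⟩

lemma mem_roughNumbers_of_dvd {k m d : ℕ} (hm : m ∈ roughNumbers k) (hd : d ∣ m) :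
    d ∈ roughNumbers k :=
  ⟨ne_zero_of_dvd_ne_zero hm.1 hd, fun p hp hpd => hm.2 p hp (hpd.trans hd)⟩

lemma le_of_mem_roughNumbers {k m : ℕ} (hm : m ∈ roughNumbers k) (h1 : m ≠ 1) : k ≤ m :=
  (hm.2 _ (minFac_prime h1) (minFac_dvd m)).trans (minFac_le (Nat.pos_of_ne_zero hm.1))

lemma coprime_of_mem_smoothNumbers_of_mem_roughNumbers {k a m : ℕ}
    (ha : a ∈ smoothNumbers k) (hm : m ∈ roughNumbers k) : a.Coprime m :=
  coprime_of_dvd fun p hp hpa hpm => (mem_smoothNumbers'.mp ha p hp hpa).not_ge (hm.2 p hp hpm)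

lemma mem_smoothNumbers_mul_roughNumbers (k : ℕ) {n : ℕ} (hn : n ≠ 0) :
    n ∈ smoothNumbers k * roughNumbers k := by
  induction n using Nat.recOnMul with
  | zero => exact absurd rfl hn
  | one => exact ⟨1, one_mem_smoothNumbers k, 1, one_mem_roughNumbers k, one_mul 1⟩
  | prime p hp =>
    rcases lt_or_ge p k with h | h
    · exact ⟨p, mem_smoothNumbers_of_lt hp.pos h, 1, one_mem_roughNumbers k, mul_one p⟩
    · refine ⟨1, one_mem_smoothNumbers k, p, ⟨hp.ne_zero, fun q hq hqp => ?_⟩, one_mul p⟩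
      rwa [(prime_dvd_prime_iff_eq hq hp).mp hqp]
  | mul a b iha ihb =>
    obtain ⟨u, hu, v, hv, rfl⟩ := iha (left_ne_zero_of_mul hn)
    obtain ⟨u', hu', v', hv', rfl⟩ := ihb (right_ne_zero_of_mul hn)
    refine ⟨u * u', mul_mem_smoothNumbers hu hu', v * v',
      ⟨mul_ne_zero hv.1 hv'.1, fun p hp h => ?_⟩, by ring⟩
    exact (hp.dvd_mul.mp h).elim (hv.2 p hp) (hv'.2 p hp)

end Nat

namespace ArithmeticFunction

open Nat (smoothNumbers roughNumbers)

lemma IsMultiplicative.support_inter_Iic_subset {R : Type*} [MonoidWithZero R]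
    {ν : ArithmeticFunction R} (hν : ν.IsMultiplicative) (k N : ℕ) :
    support ν ∩ Iic N ⊆ smoothNumbers k * (support ν ∩ roughNumbers k ∩ Iic N) := by
  rintro n ⟨hνn, hnN⟩
  have hn : n ≠ 0 := by rintro rfl; exact hνn ν.map_zero
  obtain ⟨u, hu, v, hv, rfl⟩ := Nat.mem_smoothNumbers_mul_roughNumbers k hn
  rw [mem_support,
    hν.map_mul_of_coprime (Nat.coprime_of_mem_smoothNumbers_of_mem_roughNumbers hu hv)] at hνn
  exact ⟨u, hu, v, ⟨⟨right_ne_zero_of_mul hνn, hv⟩,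
    (Nat.le_mul_of_pos_left v (Nat.pos_of_ne_zero hu.1)).trans hnN⟩, rfl⟩

theorem mul_apply_mul_eq_of_forall_ne {R : Type*} [Semiring R] {f ν : ArithmeticFunction R}
    (hν : ν.IsMultiplicative) {a k m : ℕ} (hmin : ∀ x, f x ≠ 0 → a ≤ x)
    (ha : a ∈ smoothNumbers k) (hm : m ∈ roughNumbers k)
    (hgood : ∀ d x m', d ∣ a → f x ≠ 0 → k ≤ x → m' ∣ m → ν m' ≠ 0 → d * m ≠ x * m') :
    (f * ν) (a * m) = f a * ν m := by
  have hcop := Nat.coprime_of_mem_smoothNumbers_of_mem_roughNumbers ha hm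
  rw [mul_apply]
  refine Finset.sum_eq_single (a, m) (fun ⟨x, e⟩ hxe hne => ?_) fun h => absurd
    (Nat.mem_divisorsAntidiagonal.mpr ⟨rfl, mul_ne_zero ha.1 hm.1⟩) h
  rw [Nat.mem_divisorsAntidiagonal] at hxe
  by_contra hterm
  have hfx := left_ne_zero_of_mul hterm
  obtain ⟨d₁, d₂, ⟨a', rfl⟩, ⟨m', rfl⟩, rfl⟩ := Nat.dvd_mul.mp (Dvd.intro e hxe.1)
  have hx : d₁ * d₂ ≠ 0 := fun h => hfx (by rw [h, f.map_zero])
  obtain rfl : e = a' * m' :=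
    Nat.eq_of_mul_eq_mul_left (Nat.pos_of_ne_zero hx) (by rw [hxe.1]; ring)
  have hνm' : ν m' ≠ 0 := by
    rw [hν.map_mul_of_coprime ((hcop.coprime_dvd_left (dvd_mul_left a' d₁)).coprime_dvd_right
      (dvd_mul_left m' d₂))] at hterm
    exact right_ne_zero_of_mul (right_ne_zero_of_mul hterm)
  by_cases hd₂ : d₂ = 1
  · subst hd₂
    obtain rfl : a' = 1 := by
      have hle : d₁ * a' ≤ d₁ * 1 := hmin _ hfx
      have := Nat.le_of_mul_le_mul_left hle (Nat.pos_of_ne_zero (left_ne_zero_of_mul hx))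
      have := Nat.pos_of_ne_zero (right_ne_zero_of_mul ha.1)
      omega
    simp at hne
  · have hk : k ≤ d₁ * d₂ :=
      (Nat.le_of_mem_roughNumbers (Nat.mem_roughNumbers_of_dvd hm (dvd_mul_right d₂ m')) hd₂).trans
        (Nat.le_mul_of_pos_left d₂ (Nat.pos_of_ne_zero (left_ne_zero_of_mul hx)))
    exact hgood d₁ _ m' (dvd_mul_right d₁ a') hfx hk (dvd_mul_left m' d₂) hνm' (by ring)

variable {R : Type*} [Semiring R] [NoZeroDivisors R] {f ν : ArithmeticFunction R} {a k : ℕ}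

lemma support_roughNumbers_subset (hν : ν.IsMultiplicative) (ha : IsLeast (support f) a)
    (hak : a ∈ smoothNumbers k) (N : ℕ) :
    support ν ∩ roughNumbers k ∩ Iic N ⊆ (a * ·) ⁻¹' support (f * ν) ∪
      ⋃ d ∈ a.divisors,
        (d * ·) ⁻¹' ((support f ∩ Ici k) * (support ν ∩ roughNumbers k ∩ Iic N)) := by
  rintro m ⟨⟨hνm, hm⟩, hmN⟩
  by_contra hbad
  rw [mem_union, not_or] at hbad
  refine hbad.1 ?_
  rw [mem_preimage, mem_support, mul_apply_mul_eq_of_forall_ne hν ha.2 hak hm ?_]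
  · exact mul_ne_zero ha.1 hνm
  intro d x m' hd hfx hkx hm' hνm' hdm
  refine hbad.2 (mem_iUnion₂.mpr
    ⟨d, Nat.mem_divisors.mpr ⟨hd, hak.1⟩, x, ⟨hfx, hkx⟩, m', ?_, hdm.symm⟩)
  exact ⟨⟨hνm', Nat.mem_roughNumbers_of_dvd hm hm'⟩,
    (Nat.le_of_dvd (Nat.pos_of_ne_zero hm.1) hm').trans hmN⟩

lemma recipMass_support_roughNumbers_le (hν : ν.IsMultiplicative) (ha : IsLeast (support f) a)
    (hak : a < k) (hsmall : (sigma 1 a : ℝ≥0∞) * recipMass (support f ∩ Ici k) ≤ 2⁻¹) (N : ℕ) :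
    recipMass (support ν ∩ roughNumbers k ∩ Iic N) ≤ 2 * (a * recipMass (support (f * ν))) := by
  set M := support ν ∩ roughNumbers k ∩ Iic N
  set c := a * recipMass (support (f * ν))
  have ha0 : a ≠ 0 := fun h => ha.1 (by rw [h, f.map_zero])
  have hM : recipMass M ≠ ⊤ := recipMass_inter_Iic_ne_top (fun h => h.1 ν.map_zero) N
  have hcover := support_roughNumbers_subset hν ha
    (Nat.mem_smoothNumbers_of_lt (Nat.pos_of_ne_zero ha0) hak) N
  have hhalf : recipMass M ≤ c + recipMass M / 2 := calc
    recipMass M ≤ recipMass ((a * ·) ⁻¹' support (f * ν)) +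
        ∑ d ∈ a.divisors, recipMass ((d * ·) ⁻¹' ((support f ∩ Ici k) * M)) :=
      (recipMass_mono hcover).trans
        ((recipMass_union_le _ _).trans (by gcongr; exact recipMass_biUnion_le _ _))
    _ ≤ c + ∑ d ∈ a.divisors, d * (recipMass (support f ∩ Ici k) * recipMass M) := by
      gcongr with d hd
      · exact recipMass_preimage_mul_le ha0 _
      · exact (recipMass_preimage_mul_le (Nat.pos_of_mem_divisors hd).ne' _).trans
          (by gcongr; exact recipMass_mul_le _ _)
    _ = c + (sigma 1 a : ℝ≥0∞) * recipMass (support f ∩ Ici k) * recipMass M := by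
      rw [sigma_one_apply, Nat.cast_sum, Finset.sum_mul, Finset.sum_mul]
      simp_rw [mul_assoc]
    _ ≤ c + recipMass M / 2 := by
      rw [ENNReal.div_eq_inv_mul]
      gcongr
  have : recipMass M / 2 ≤ c := by
    refine ENNReal.le_of_add_le_add_right (a := recipMass M / 2) (by finiteness) ?_
    rwa [ENNReal.add_halves]
  rwa [ENNReal.div_le_iff (by norm_num) (by norm_num), mul_comm] at this

end ArithmeticFunction

theorem uncertainty_principle
    (ν : ArithmeticFunction ℂ) (hν : ν.IsMultiplicative)
    (hdens : ∃ d : ℝ, 0 < d ∧ HasDensity {n : ℕ | ν n ≠ 0} d)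
    (f g : ArithmeticFunction ℂ) (hg : g = f * ν)
    (hnz : ¬ (f = 0 ∧ g = 0)) :
    ¬ (Thin {n : ℕ | f n ≠ 0} ∧ Thin {n : ℕ | g n ≠ 0}) := by
  rintro ⟨hfThin, hgThin⟩
  obtain ⟨d, hd, hdens⟩ := hdens
  obtain ⟨n, hn⟩ : ∃ n, f n ≠ 0 := by
    by_contra! h
    have hf : f = 0 := ArithmeticFunction.ext h
    exact hnz ⟨hf, by rw [hg, hf, zero_mul]⟩
  set a := sInf (support f)
  have ha : IsLeast (support f) a := isLeast_csInf ⟨n, hn⟩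
  have hA := recipMass_ne_top_of_thin (X := support f) (fun h => h f.map_zero) hfThin
  have hB := recipMass_ne_top_of_thin (X := support g) (fun h => h g.map_zero) hgThin
  obtain ⟨k, hak, hk⟩ := exists_lt_mul_recipMass_inter_Ici_le hA a (sigma 1 a)
    (ε := 2⁻¹) (by norm_num)
  have hsmooth := recipMass_ne_top_of_thin (fun h => h.1 rfl) (Nat.thin_smoothNumbers k)
  have hbound (N : ℕ) : recipMass (support ν ∩ Iic N) ≤
      recipMass (Nat.smoothNumbers k) * (2 * (a * recipMass (support g))) := calc
    recipMass (support ν ∩ Iic N)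
        ≤ recipMass (Nat.smoothNumbers k) * recipMass (support ν ∩ Nat.roughNumbers k ∩ Iic N) :=
      (recipMass_mono (hν.support_inter_Iic_subset k N)).trans (recipMass_mul_le _ _)
    _ ≤ recipMass (Nat.smoothNumbers k) * (2 * (a * recipMass (support g))) := by
      rw [hg]
      gcongr
      exact recipMass_support_roughNumbers_le hν ha hak hk N
  exact ne_top_of_le_ne_top (by finiteness) (recipMass_le_of_forall_inter_Iic_le hbound)
    (recipMass_eq_top_of_hasDensity hd hdens)
end
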